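/- arXiv:math/0505672 — 2 statements merged into one kernel-verified Lean document; each statement's English description precedes it below -/
import Mathlib

section
/- For every d ≥ 2, the critical probability p_c of Bernoulli bond percolation on Z^d satisfies 0 < p_c < 1. -/
open MeasureTheory Filter Topology
open scoped ENNReal NNReal Classical

namespace PercWalk

/-- The lattice `ℤ^d`. -/
abbrev Zd (d : ℕ) := Fin d → ℤ

/-- A percolation configuration: `ω (x, i)` is the state of the bond from `x` to `x + eᵢ`. -/
abbrev Config (d : ℕ) := (Zd d × Fin d) → Bool

noncomputable section

variable {d : ℕ}

/-- The `i`-th unit vector of `ℤ^d`. -/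
def unitV (d : ℕ) (i : Fin d) : Zd d := fun j => if j = i then 1 else 0

/-- The (unordered) nearest-neighbour edge `{x,y}` is open in the configuration `ω`. -/
def edgeOpen (ω : Config d) (x y : Zd d) : Prop :=
  (∃ i, y = x + unitV d i ∧ ω (x, i) = true) ∨ (∃ i, x = y + unitV d i ∧ ω (y, i) = true)

/-- Translation (shift) of a configuration by `x`: this is `x.ω`. -/
def shift (x : Zd d) (ω : Config d) : Config d := fun p => ω (x + p.1, p.2)

/-- The open cluster of the point `x` in the configuration `ω`. -/
def cluster (ω : Config d) (x : Zd d) : Set (Zd d) :=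
  {y | Relation.ReflTransGen (fun a b => edgeOpen ω a b) x y}

/-- The set of points lying in an infinite open cluster (a.s. the unique infinite cluster `C(ω)`). -/
def infCluster (ω : Config d) : Set (Zd d) := {x | (cluster ω x).Infinite}

/-- The event `#C₀(ω) = ∞`. -/
def InfiniteCluster0 (d : ℕ) : Set (Config d) := {ω | (cluster ω 0).Infinite}

/-- The set `B` of lattice neighbours of the origin, as a finset. -/
def nbrs (d : ℕ) : Finset (Zd d) :=
  (Finset.univ : Finset (Fin d × Bool)).image
    (fun p => if p.2 then unitV d p.1 else -unitV d p.1)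

/-- `n^ω(x)`: the number of neighbours of `x` in its cluster. -/
def deg (ω : Config d) (x : Zd d) : ℕ :=
  ((nbrs d).filter (fun e => edgeOpen ω x (x + e))).card

/-- `Q` is Bernoulli(`p`) bond percolation: the bonds are i.i.d. Bernoulli(`p`). -/
def IsBernoulli (Q : Measure (Config d)) (p : ℝ) : Prop :=
  IsProbabilityMeasure Q ∧
    ∀ s : Finset (Zd d × Fin d), ∀ f : (Zd d × Fin d) → Bool,
      Q {ω | ∀ a ∈ s, ω a = f a} =
        ∏ a ∈ s, ENNReal.ofReal (if f a then p else 1 - p)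

/-- The critical probability associated with a family `Qf p` of Bernoulli(`p`)
percolation measures. -/
def pcOf (Qf : ℝ → Measure (Config d)) : ℝ :=
  sSup {p : ℝ | p ∈ Set.Icc (0 : ℝ) 1 ∧ Qf p (InfiniteCluster0 d) = 0}

/-- The conditional measure `Q₀ = Q( · | #C₀(ω) = ∞)`. -/
def Q0 (Q : Measure (Config d)) : Measure (Config d) :=
  ProbabilityTheory.cond Q (InfiniteCluster0 d)

/-- The measure `M` on `Ω × B`, `∫ u dM = Q[∑_{b∈B} ω(b) u(ω,b) 1_{#C₀(ω)=∞}]`. -/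
def Mm (Q : Measure (Config d)) : Measure (Config d × Zd d) :=
  ∑ e ∈ nbrs d, Measure.map (fun ω => (ω, e))
    (Q.restrict {ω | edgeOpen ω 0 e ∧ ω ∈ InfiniteCluster0 d})

/-- A local function: it depends on finitely many bonds only. -/
def IsLocal (u : Config d → ℝ) : Prop :=
  ∃ s : Finset (Zd d × Fin d), ∀ ω ω' : Config d, (∀ a ∈ s, ω a = ω' a) → u ω = u ω'

/-- The gradient `∇^{(ω)} u (ω,b) = u(b.ω) - u(ω)` of a function on configurations. -/
def gradF (u : Config d → ℝ) : Config d × Zd d → ℝ := fun p => u (shift p.2 p.1) - u p.1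

/-- `L²_pot`: the closure in `L²(Ω × B, M)` of the set of gradients of local functions. -/
def L2pot (Q : Measure (Config d)) : Set (Lp ℝ 2 (Mm Q)) :=
  closure {v : Lp ℝ 2 (Mm Q) |
    ∃ u : Config d → ℝ, IsLocal u ∧ (v : Config d × Zd d → ℝ) =ᵐ[Mm Q] gradF u}

/-- `L²_sol`: the orthogonal complement of `L²_pot` in `L²(Ω × B, M)`. -/
def L2sol (Q : Measure (Config d)) : Set (Lp ℝ 2 (Mm Q)) :=
  {w : Lp ℝ 2 (Mm Q) | ∀ v ∈ L2pot Q, inner (𝕜 := ℝ) w v = 0}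

/-- The divergence `∇^{(ω)*} v (ω) = (1/n^ω(0)) ∑_{b∈B} ω(b) (v(ω,b) - v(b.ω,-b))`. -/
def divStarF (ω : Config d) (v : Config d → Zd d → ℝ) : ℝ :=
  (deg ω 0 : ℝ)⁻¹ * ∑ e ∈ nbrs d,
    if edgeOpen ω 0 e then v ω e - v (shift e ω) (-e) else 0

/-- The field `b̂(ω,e) = 1_{e=b} - 1_{e=-b}`. -/
def bhat (b : Zd d) : Config d × Zd d → ℝ :=
  fun p => (if p.2 = b then (1 : ℝ) else 0) - (if p.2 = -b then (1 : ℝ) else 0)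

/-- Scalar product of an integer vector with an integer vector, as a real number. -/
def dotZ (x y : Zd d) : ℝ := ∑ i, (x i : ℝ) * (y i : ℝ)

/-- Scalar product of a real vector with an integer vector. -/
def dotR (v : Fin d → ℝ) (y : Zd d) : ℝ := ∑ i, v i * (y i : ℝ)

/-- The generator `L^ω f(x) = (1/n^ω(x)) ∑_{y∼x} ω(x,y) (f(y) - f(x))`. -/
def Lgen (ω : Config d) (f : Zd d → ℝ) (x : Zd d) : ℝ :=
  (deg ω x : ℝ)⁻¹ * ∑ e ∈ nbrs d,
    if edgeOpen ω x (x + e) then f (x + e) - f x else 0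

/-- `G` is a family `(G_b)_{b ∈ B}` with `G_b ∈ L²_pot` and `b̂ + G_b ∈ L²_sol`
(`G_b` is the projection of `-b̂` on `L²_pot`), given by an everywhere-defined
representative. -/
def IsGradField (Q : Measure (Config d)) (G : Zd d → Config d → Zd d → ℝ) : Prop :=
  ∀ b ∈ nbrs d,
    (∃ g : Lp ℝ 2 (Mm Q), g ∈ L2pot Q ∧
      (g : Config d × Zd d → ℝ) =ᵐ[Mm Q] fun p => G b p.1 p.2) ∧
    (∀ v ∈ L2pot Q, ∫ p, (bhat b p + G b p.1 p.2) * (v : Config d × Zd d → ℝ) p ∂(Mm Q) = 0)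

/-- `χ(ω,·)` is a corrector associated with the family `G`: for `x` in the cluster of the
origin and an open bond `(x, x+e)`, `χ(ω,x+e)·b − χ(ω,x)·b = G_b(x.ω, e)`. -/
def IsCorrector (G : Zd d → Config d → Zd d → ℝ) (χ : Zd d → Fin d → ℝ) (ω : Config d) : Prop :=
  ∀ x ∈ cluster ω 0, ∀ e ∈ nbrs d, edgeOpen ω x (x + e) → ∀ b ∈ nbrs d,
    dotR (χ (x + e)) b - dotR (χ x) b = G b (shift x ω) e

/-- The Palm-type measure `P̄(A) = Q[1_A n^ω(0) 1_{0 ∈ C(ω)}]`. -/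
def Pbar (Q : Measure (Config d)) : Measure (Config d) :=
  Q.withDensity (fun ω => if (0 : Zd d) ∈ infCluster ω then (deg ω 0 : ℝ≥0∞) else 0)

/-- The open unit box `G = ]-1,1[^d`. -/
def boxG (d : ℕ) : Set (Fin d → ℝ) := {v | ∀ i, |v i| < 1}

/-- The point `ε x ∈ ℝ^d` for `x ∈ ℤ^d`. -/
def scl (ε : ℝ) (x : Zd d) : Fin d → ℝ := fun i => ε * (x i : ℝ)

end

end PercWalk

namespace PercWalk

section Walks

variable {V : Type*} {S : Type*} {B : Type*}

/-- Position after `n` steps of the walk started at `a` with step sequence `σ`. -/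
def wpos (move : V → S → V) (a : V) (σ : ℕ → S) : ℕ → V
  | 0 => a
  | (t+1) => move (wpos move a σ t) (σ t)

variable (move : V → S → V)

lemma wpos_congr (a : V) (σ σ' : ℕ → S) (n : ℕ) (h : ∀ t < n, σ t = σ' t) :
    wpos move a σ n = wpos move a σ' n := by
  induction n with
  | zero => rfl
  | succ n ih =>
      simp only [wpos]
      rw [ih (fun t ht => h t (by omega)), h n (by omega)]

lemma walk_of_rtg [Nonempty S] (good : V → S → Prop) (r : V → V → Prop)
    (hr : ∀ v w, r v w → ∃ s, move v s = w ∧ good v s)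
    {a b : V} (hab : Relation.ReflTransGen r a b) :
    ∃ ℓ σ, wpos move a σ ℓ = b ∧ ∀ t < ℓ, good (wpos move a σ t) (σ t) := by
  induction hab with
  | refl => exact ⟨0, fun _ => Classical.arbitrary S, rfl, by omega⟩
  | tail hbc hcd ih =>
      obtain ⟨ℓ, σ, hend, hgood⟩ := ih
      obtain ⟨s, hs, hgs⟩ := hr _ _ hcd
      refine ⟨ℓ + 1, Function.update σ ℓ s, ?_, ?_⟩
      · have hag : wpos move a (Function.update σ ℓ s) ℓ = wpos move a σ ℓ := by
          apply wpos_congr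
          intro t ht
          simp [Function.update_of_ne (by omega : t ≠ ℓ)]
        simp only [wpos, hag, hend, Function.update_self, hs]
      · intro t ht
        have hag : ∀ u ≤ ℓ, wpos move a (Function.update σ ℓ s) u = wpos move a σ u := by
          intro u hu
          apply wpos_congr
          intro t' ht'
          simp [Function.update_of_ne (by omega : t' ≠ ℓ)]
        rcases Nat.lt_succ_iff_lt_or_eq.1 ht with h' | h'
        · rw [hag t (by omega), Function.update_of_ne (by omega : t ≠ ℓ)]
          exact hgood t h'
        · subst h'
          rw [hag t le_rfl, Function.update_self, hend]
          exact hgs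

/-- From any walk we can extract a walk with pairwise distinct positions. -/
lemma exists_nodup_walk [Nonempty S] (good : V → S → Prop) (a b : V)
    (h : ∃ ℓ σ, wpos move a σ ℓ = b ∧ ∀ t < ℓ, good (wpos move a σ t) (σ t)) :
    ∃ ℓ σ, wpos move a σ ℓ = b ∧ (∀ t < ℓ, good (wpos move a σ t) (σ t)) ∧
      ∀ t s', t < s' → s' ≤ ℓ → wpos move a σ t ≠ wpos move a σ s' := by
  classical
  have h' : ∃ ℓ, ∃ σ, wpos move a σ ℓ = b ∧ ∀ t < ℓ, good (wpos move a σ t) (σ t) := h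
  set ℓ := Nat.find h' with hℓdef
  obtain ⟨σ, hend, hgood⟩ := Nat.find_spec h'
  refine ⟨ℓ, σ, hend, hgood, ?_⟩
  intro t s' hts hsl heq
  -- splice out the loop to get a shorter walk
  set σ'' : ℕ → S := fun u => if u < t then σ u else σ (u + (s' - t)) with hσ''
  have hag1 : ∀ u ≤ t, wpos move a σ'' u = wpos move a σ u := by
    intro u hu
    apply wpos_congr
    intro t' ht'
    simp only [hσ'', if_pos (by omega : t' < t)]
  have hag2 : ∀ u, wpos move a σ'' (t + u) = wpos move a σ (s' + u) := by
    intro u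
    induction u with
    | zero => simpa using (hag1 t le_rfl).trans heq
    | succ u ih =>
        have e1 : t + (u + 1) = (t + u) + 1 := by ring
        have e2 : s' + (u + 1) = (s' + u) + 1 := by ring
        rw [e1, e2]
        simp only [wpos, ih]
        congr 1
        simp only [hσ'', if_neg (by omega : ¬ t + u < t)]
        congr 1
        omega
  have hlt : ℓ - (s' - t) < ℓ := by omega
  have : ∃ σ₀, wpos move a σ₀ (ℓ - (s' - t)) = b ∧
      ∀ u < ℓ - (s' - t), good (wpos move a σ₀ u) (σ₀ u) := by
    refine ⟨σ'', ?_, ?_⟩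
    · have : ℓ - (s' - t) = t + (ℓ - s') := by omega
      rw [this, hag2 (ℓ - s')]
      have : s' + (ℓ - s') = ℓ := by omega
      rw [this, hend]
    · intro u hu
      by_cases hut : u < t
      · have h1 : wpos move a σ'' u = wpos move a σ u := hag1 u (by omega)
        have h2 : σ'' u = σ u := by simp only [hσ'', if_pos hut]
        rw [h1, h2]
        exact hgood u (by omega)
      · have hu' : u = t + (u - t) := by omega
        have h1 : wpos move a σ'' u = wpos move a σ (s' + (u - t)) := by
          conv_lhs => rw [hu']
          exact hag2 (u - t)
        have h2 : σ'' u = σ (s' + (u - t)) := by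
          simp only [hσ'', if_neg hut]
          congr 1
          omega
        rw [h1, h2]
        exact hgood (s' + (u - t)) (by omega)
  exact absurd (Nat.find_min' h' this) (by omega)

lemma wpos_coord (c : V → ℤ) (h1 : ∀ v s, |c (move v s) - c v| ≤ 1)
    (a : V) (σ : ℕ → S) (n : ℕ) : |c (wpos move a σ n) - c a| ≤ n := by
  induction n with
  | zero => simp [wpos]
  | succ n ih =>
      simp only [wpos]
      set x := wpos move a σ n with hx
      have h2 := h1 x (σ n)
      have hsplit : c (move x (σ n)) - c a = (c (move x (σ n)) - c x) + (c x - c a) := by ring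
      rw [hsplit]
      calc |(c (move x (σ n)) - c x) + (c x - c a)|
          ≤ |c (move x (σ n)) - c x| + |c x - c a| := abs_add_le _ _
        _ ≤ 1 + n := add_le_add h2 ih
        _ = ((n + 1 : ℕ) : ℤ) := by push_cast; ring

/-- Distinct positions give pairwise distinct bonds along the walk. -/
lemma bonds_injOn (bond : V → S → B)
    (hpair : ∀ v s v' s', bond v s = bond v' s' →
      (v = v' ∧ move v s = move v' s') ∨ (v = move v' s' ∧ move v s = v'))
    (a : V) (σ : ℕ → S) (ℓ : ℕ)
    (hnd : ∀ t s', t < s' → s' ≤ ℓ → wpos move a σ t ≠ wpos move a σ s') :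
    ∀ t < ℓ, ∀ s' < ℓ,
      bond (wpos move a σ t) (σ t) = bond (wpos move a σ s') (σ s') → t = s' := by
  intro t ht s' hs' hb
  by_contra hne
  -- wlog t < s'
  have key : ∀ t s', t < s' → s' < ℓ →
      bond (wpos move a σ t) (σ t) = bond (wpos move a σ s') (σ s') → False := by
    intro t s' hts hsl hb
    rcases hpair _ _ _ _ hb with ⟨h1, _⟩ | ⟨h1, h2⟩
    · exact hnd t s' hts (by omega) h1
    · -- wpos t = move (wpos s') (σ s') = wpos (s'+1), and wpos (t+1) = wpos s'
      have e1 : wpos move a σ t = wpos move a σ (s' + 1) := by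
        simpa only [wpos] using h1
      have e2 : wpos move a σ (t + 1) = wpos move a σ s' := by
        simpa only [wpos] using h2
      exact hnd t (s' + 1) (by omega) (by omega) e1
  rcases lt_or_gt_of_ne hne with h | h
  · exact key t s' h hs' hb
  · exact key s' t h ht hb.symm

end Walks
section Events

variable {d : ℕ} {V S : Type*} [Fintype S] [Nonempty S]

/-- Extend a finite step sequence to `ℕ`. -/
noncomputable def extSteps {n : ℕ} (σF : Fin n → S) : ℕ → S :=
  fun t => if h : t < n then σF ⟨t, h⟩ else Classical.arbitrary S

variable (move : V → S → V) (bond : V → S → (Zd d × Fin d))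

/-- The walk has pairwise distinct positions up to time `ℓ`. -/
def NodupWalk (a : V) (σ : ℕ → S) (ℓ : ℕ) : Prop :=
  ∀ t s', t < s' → s' ≤ ℓ → wpos move a σ t ≠ wpos move a σ s'

/-- The event that all the bonds along a given walk have state `c`. -/
def wEvent (a : V) (c : Bool) (ℓ : ℕ) (σF : Fin ℓ → S) : Set (Config d) :=
  if NodupWalk move a (extSteps σF) ℓ then
    {ω | ∀ q ∈ (Finset.range ℓ).image
        (fun t => bond (wpos move a (extSteps σF) t) (extSteps σF t)), ω q = c}
  else ∅

lemma wEvent_prob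
    (hpair : ∀ v s v' s', bond v s = bond v' s' →
      (v = v' ∧ move v s = move v' s') ∨ (v = move v' s' ∧ move v s = v'))
    {Q : Measure (Config d)} {p : ℝ} (hQ : IsBernoulli Q p)
    (a : V) (c : Bool) (ℓ : ℕ) (σF : Fin ℓ → S) :
    Q (wEvent move bond a c ℓ σF) ≤ ENNReal.ofReal (if c then p else 1 - p) ^ ℓ := by
  rw [wEvent]
  by_cases hnd : NodupWalk move a (extSteps σF) ℓ
  · rw [if_pos hnd]
    set σ := extSteps σF with hσ
    set s : Finset (Zd d × Fin d) :=
      (Finset.range ℓ).image (fun t => bond (wpos move a σ t) (σ t)) with hs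
    have hcard : s.card = ℓ := by
      rw [hs, Finset.card_image_of_injOn, Finset.card_range]
      intro t ht s' hs' hb
      simp only [Finset.coe_range, Set.mem_Iio] at ht hs'
      exact bonds_injOn move bond hpair a σ ℓ hnd t ht s' hs' hb
    have hber := hQ.2 s (fun _ => c)
    calc Q {ω | ∀ q ∈ s, ω q = c} = ∏ _a ∈ s, ENNReal.ofReal (if c then p else 1 - p) := hber
      _ = ENNReal.ofReal (if c then p else 1 - p) ^ s.card := Finset.prod_const _
      _ = ENNReal.ofReal (if c then p else 1 - p) ^ ℓ := by rw [hcard]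
      _ ≤ ENNReal.ofReal (if c then p else 1 - p) ^ ℓ := le_rfl
  · rw [if_neg hnd]
    simp

lemma mem_wEvent (a : V) (c : Bool) (ℓ : ℕ) (σ : ℕ → S)
    (hnd : NodupWalk move a σ ℓ) (ω : Config d)
    (hω : ∀ t < ℓ, ω (bond (wpos move a σ t) (σ t)) = c) :
    ω ∈ wEvent move bond a c ℓ (fun t => σ t.val) := by
  have hagree : ∀ u ≤ ℓ, wpos move a (extSteps (fun t : Fin ℓ => σ t.val)) u = wpos move a σ u := by
    intro u hu
    apply wpos_congr
    intro t ht
    simp only [extSteps, dif_pos (by omega : t < ℓ)]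
  have hnd' : NodupWalk move a (extSteps (fun t : Fin ℓ => σ t.val)) ℓ := by
    intro t s' hts hsl
    rw [hagree t (by omega), hagree s' hsl]
    exact hnd t s' hts hsl
  rw [wEvent, if_pos hnd']
  intro q hq
  simp only [Finset.mem_image, Finset.mem_range] at hq
  obtain ⟨t, ht, rfl⟩ := hq
  have h1 : extSteps (fun t : Fin ℓ => σ t.val) t = σ t := by
    simp only [extSteps, dif_pos ht]
  rw [hagree t (by omega), h1]
  exact hω t ht

lemma geom_tail (r : ℝ≥0∞) (n : ℕ) : (∑' m : ℕ, r ^ (n + m)) = r ^ n * (1 - r)⁻¹ := by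
  simp only [pow_add]
  rw [ENNReal.tsum_mul_left, ENNReal.tsum_geometric]

lemma union_prob
    (hpair : ∀ v s v' s', bond v s = bond v' s' →
      (v = v' ∧ move v s = move v' s') ∨ (v = move v' s' ∧ move v s = v'))
    {Q : Measure (Config d)} {p : ℝ} (hQ : IsBernoulli Q p)
    (a : V) (c : Bool) (n : ℕ) :
    Q (⋃ (m : ℕ) (σF : Fin (n + m) → S), wEvent move bond a c (n + m) σF) ≤
      ((Fintype.card S : ℝ≥0∞) * ENNReal.ofReal (if c then p else 1 - p)) ^ n *
        (1 - (Fintype.card S : ℝ≥0∞) * ENNReal.ofReal (if c then p else 1 - p))⁻¹ := by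
  set q : ℝ≥0∞ := ENNReal.ofReal (if c then p else 1 - p) with hq
  set r : ℝ≥0∞ := (Fintype.card S : ℝ≥0∞) * q with hr
  calc Q (⋃ (m : ℕ) (σF : Fin (n + m) → S), wEvent move bond a c (n + m) σF)
      ≤ ∑' m : ℕ, Q (⋃ (σF : Fin (n + m) → S), wEvent move bond a c (n + m) σF) :=
        measure_iUnion_le _
    _ ≤ ∑' m : ℕ, r ^ (n + m) := by
        apply ENNReal.tsum_le_tsum
        intro m
        calc Q (⋃ (σF : Fin (n + m) → S), wEvent move bond a c (n + m) σF)
            ≤ ∑' σF : Fin (n + m) → S, Q (wEvent move bond a c (n + m) σF) :=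
              measure_iUnion_le _
          _ = ∑ σF : Fin (n + m) → S, Q (wEvent move bond a c (n + m) σF) := tsum_fintype _
          _ ≤ ∑ _σF : Fin (n + m) → S, q ^ (n + m) :=
              Finset.sum_le_sum (fun σF _ => wEvent_prob move bond hpair hQ a c (n + m) σF)
          _ = (Fintype.card (Fin (n + m) → S) : ℝ≥0∞) * q ^ (n + m) := by
              rw [Finset.sum_const, Finset.card_univ, nsmul_eq_mul]
          _ = r ^ (n + m) := by
              rw [Fintype.card_fun, Fintype.card_fin, hr, mul_pow]
              push_cast
              ring
    _ = r ^ n * (1 - r)⁻¹ := geom_tail r n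

end Events
section Subcrit

/-- Step move for walks on `ℤ^d`. -/
def move1 (d : ℕ) : Zd d → (Fin d × Bool) → Zd d :=
  fun x s => if s.2 then x + unitV d s.1 else x - unitV d s.1

/-- The bond used by a step. -/
def bond1 (d : ℕ) : Zd d → (Fin d × Bool) → (Zd d × Fin d) :=
  fun x s => (if s.2 then x else x - unitV d s.1, s.1)

lemma pair1 (d : ℕ) : ∀ (v : Zd d) s v' s', bond1 d v s = bond1 d v' s' →
    (v = v' ∧ move1 d v s = move1 d v' s') ∨ (v = move1 d v' s' ∧ move1 d v s = v') := by
  rintro v ⟨i, b⟩ v' ⟨i', b'⟩ h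
  simp only [bond1, Prod.mk.injEq] at h
  obtain ⟨h1, h2⟩ := h
  subst h2
  cases b <;> cases b'
  · -- false, false
    simp only [Bool.false_eq_true, if_false] at h1
    have hv : v = v' := by
      calc v = v - unitV d i + unitV d i := by abel
        _ = v' - unitV d i + unitV d i := by rw [h1]
        _ = v' := by abel
    exact Or.inl ⟨hv, by rw [hv]⟩
  · -- false, true
    simp only [Bool.false_eq_true, if_false, if_true] at h1
    refine Or.inr ⟨?_, ?_⟩
    · show v = move1 d v' (i, true)
      simp only [move1, if_true]
      rw [← h1]; abel
    · show move1 d v (i, false) = v'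
      simp only [move1, Bool.false_eq_true, if_false]
      exact h1
  · -- true, false
    simp only [Bool.false_eq_true, if_false, if_true] at h1
    refine Or.inr ⟨?_, ?_⟩
    · show v = move1 d v' (i, false)
      simp only [move1, Bool.false_eq_true, if_false]
      exact h1
    · show move1 d v (i, true) = v'
      simp only [move1, if_true]
      rw [h1]; abel
  · simp only [if_true] at h1
    exact Or.inl ⟨h1, by rw [h1]⟩

lemma step1 (d : ℕ) (ω : Config d) : ∀ v w, edgeOpen ω v w →
    ∃ s, move1 d v s = w ∧ ω (bond1 d v s) = true := by
  intro v w h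
  rcases h with ⟨i, hy, hb⟩ | ⟨i, hx, hb⟩
  · exact ⟨(i, true), by simp [move1, hy], by simpa [bond1] using hb⟩
  · refine ⟨(i, false), by simp [move1]; rw [hx]; abel, ?_⟩
    have : v - unitV d i = w := by rw [hx]; abel
    simpa [bond1, this] using hb

lemma coord1 (d : ℕ) (i₀ : Fin d) :
    ∀ (v : Zd d) s, |(move1 d v s) i₀ - v i₀| ≤ 1 := by
  rintro v ⟨i, b⟩
  cases b <;> simp only [move1, if_true, if_false, Bool.false_eq_true, Pi.add_apply,
    Pi.sub_apply, unitV]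
  · by_cases h : i₀ = i <;> simp [h]
  · by_cases h : i₀ = i <;> simp [h]

theorem subcrit (d : ℕ) (hd : 2 ≤ d) {Q : Measure (Config d)}
    (hQ : IsBernoulli Q (1 / (4 * (d : ℝ)))) : Q (InfiniteCluster0 d) = 0 := by
  haveI : Nonempty (Fin d × Bool) := ⟨(⟨0, by omega⟩, true)⟩
  set p : ℝ := 1 / (4 * (d : ℝ)) with hp
  -- the inclusion into the union of walk events
  have hsub : ∀ n : ℕ, InfiniteCluster0 d ⊆
      ⋃ (m : ℕ) (σF : Fin (n + 1 + m) → (Fin d × Bool)),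
        wEvent (move1 d) (bond1 d) (0 : Zd d) true (n + 1 + m) σF := by
    intro n ω hω
    have hinf : (cluster ω 0).Infinite := hω
    -- find a far point of the cluster
    have hbox : (Set.univ.pi (fun _ : Fin d => Set.Icc (-(n : ℤ)) (n : ℤ))).Finite :=
      Set.Finite.pi (fun _ => Set.finite_Icc _ _)
    obtain ⟨y, hy, hyb⟩ : ∃ y ∈ cluster ω 0,
        y ∉ Set.univ.pi (fun _ : Fin d => Set.Icc (-(n : ℤ)) (n : ℤ)) := by
      by_contra hcon
      push_neg at hcon
      exact hinf (hbox.subset hcon)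
    rw [Set.mem_pi] at hyb
    push_neg at hyb
    obtain ⟨i₀, -, hyi⟩ := hyb
    have hicc : ¬(-(n : ℤ) ≤ y i₀ ∧ y i₀ ≤ (n : ℤ)) := by
      simpa [Set.mem_Icc] using hyi
    have hfar : (n : ℤ) < |y i₀| := by
      rcases not_and_or.1 hicc with h | h <;> push_neg at h <;>
        rcases abs_cases (y i₀) with ⟨he, hsign⟩ | ⟨he, hsign⟩ <;> omega
    -- a walk with distinct positions from 0 to y
    obtain ⟨ℓ, σ, hend, hgood, hnd⟩ :=
      exists_nodup_walk (move1 d) (fun v s => ω (bond1 d v s) = true) (0 : Zd d) y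
        (walk_of_rtg (move1 d) _ _ (step1 d ω) hy)
    have hlen : n + 1 ≤ ℓ := by
      have := wpos_coord (move1 d) (fun v => v i₀) (coord1 d i₀) (0 : Zd d) σ ℓ
      rw [hend] at this
      simp only [Pi.zero_apply, sub_zero] at this
      omega
    refine Set.mem_iUnion.2 ⟨ℓ - (n + 1), ?_⟩
    have hℓ : n + 1 + (ℓ - (n + 1)) = ℓ := by omega
    rw [hℓ]
    exact Set.mem_iUnion.2 ⟨fun t => σ t.val,
      mem_wEvent (move1 d) (bond1 d) 0 true ℓ σ hnd ω hgood⟩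
  -- probability bound
  have hr : ((Fintype.card (Fin d × Bool) : ℝ≥0∞) *
      ENNReal.ofReal (if true then p else 1 - p)) = 2⁻¹ := by
    rw [if_pos rfl]
    have hc : (Fintype.card (Fin d × Bool) : ℝ≥0∞) = ENNReal.ofReal ((d * 2 : ℕ) : ℝ) := by
      rw [Fintype.card_prod, Fintype.card_fin, Fintype.card_bool, ENNReal.ofReal_natCast]
    rw [hc, ← ENNReal.ofReal_mul (by positivity)]
    have hd0 : (d : ℝ) ≠ 0 := by positivity
    have : ((d * 2 : ℕ) : ℝ) * p = 1 / 2 := by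
      push_cast [hp]
      field_simp
      ring
    rw [this]
    rw [one_div, ENNReal.ofReal_inv_of_pos (by norm_num : (0:ℝ) < 2)]
    norm_num
  have hbound : ∀ n : ℕ, Q (InfiniteCluster0 d) ≤ (2⁻¹ : ℝ≥0∞) ^ n := by
    intro n
    calc Q (InfiniteCluster0 d)
        ≤ Q (⋃ (m : ℕ) (σF : Fin (n + 1 + m) → (Fin d × Bool)),
            wEvent (move1 d) (bond1 d) (0 : Zd d) true (n + 1 + m) σF) :=
          measure_mono (hsub n)
      _ ≤ ((Fintype.card (Fin d × Bool) : ℝ≥0∞) *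
            ENNReal.ofReal (if true then p else 1 - p)) ^ (n + 1) *
          (1 - (Fintype.card (Fin d × Bool) : ℝ≥0∞) *
            ENNReal.ofReal (if true then p else 1 - p))⁻¹ :=
          union_prob (move1 d) (bond1 d) (pair1 d) hQ 0 true (n + 1)
      _ = (2⁻¹ : ℝ≥0∞) ^ (n + 1) * (1 - 2⁻¹)⁻¹ := by rw [hr]
      _ = (2⁻¹ : ℝ≥0∞) ^ n := by
          rw [ENNReal.one_sub_inv_two, pow_succ, mul_assoc,
            ENNReal.mul_inv_cancel (by simp) (by simp), mul_one]
  have htend : Tendsto (fun n : ℕ => (2⁻¹ : ℝ≥0∞) ^ n) atTop (nhds 0) :=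
    ENNReal.tendsto_pow_atTop_nhds_zero_of_lt_one (by norm_num)
  have : Q (InfiniteCluster0 d) ≤ 0 := ge_of_tendsto' htend hbound
  exact le_antisymm this zero_le

end Subcrit
section ContourCore

/-- Indicator (in `ZMod 2`) that the horizontal primal bond at `(x,y)` is a boundary bond
whose dual edge lies in the explored component. -/
noncomputable def fHd (χ : ℤ × ℤ → ZMod 2) (Rch : ℤ × ℤ → Prop) (x y : ℤ) : ZMod 2 :=
  if χ (x, y) ≠ χ (x + 1, y) ∧ Rch (x, y - 1) then 1 else 0

/-- Same for the vertical primal bond at `(x,y)`. -/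
noncomputable def fVd (χ : ℤ × ℤ → ZMod 2) (Rch : ℤ × ℤ → Prop) (x y : ℤ) : ZMod 2 :=
  if χ (x, y) ≠ χ (x, y + 1) ∧ Rch (x - 1, y) then 1 else 0

/-- Parity of explored boundary bonds crossed by the right ray from `(x,y)`. -/
noncomputable def encd (χ : ℤ × ℤ → ZMod 2) (Rch : ℤ × ℤ → Prop) (R : ℤ) (x y : ℤ) : ZMod 2 :=
  ∑ j ∈ Finset.Icc x (R + 1), fHd χ Rch j y

/-- Neighbour relation "`z ~ w` across a non-boundary bond". -/
def nbRel (χ : ℤ × ℤ → ZMod 2) (z w : ℤ × ℤ) : Prop :=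
  (∃ x y : ℤ, ((z = (x, y) ∧ w = (x + 1, y)) ∨ (w = (x, y) ∧ z = (x + 1, y))) ∧
    χ (x, y) = χ (x + 1, y)) ∨
  (∃ x y : ℤ, ((z = (x, y) ∧ w = (x, y + 1)) ∨ (w = (x, y) ∧ z = (x, y + 1))) ∧
    χ (x, y) = χ (x, y + 1))

-- ZMod 2 helpers
lemma z2_add_self (x : ZMod 2) : x + x = 0 := by revert x; decide
lemma z2_eq_of_add_eq_zero {x y : ZMod 2} (h : x + y = 0) : x = y := by revert h; revert x y; decide
lemma z2_rearr (p q r s : ZMod 2) (h : p + q + r + s = 0) : p + q = r + s := by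
  revert h; revert p q r s; decide
lemma z2_ne_iff {x y : ZMod 2} : x ≠ y ↔ x + y = 1 := by revert x y; decide
lemma z2_one_of_ne {x y : ZMod 2} (h : x ≠ y) : x = 1 ∨ y = 1 := by
  revert h; revert x y; decide

/-- Telescoping sum in `ZMod 2`. -/
lemma ztelescope (g : ℤ → ZMod 2) : ∀ (n : ℕ) (a : ℤ),
    ∑ j ∈ Finset.Icc a (a + (n : ℤ) - 1), (g j + g (j + 1)) = g a + g (a + n) := by
  intro n
  induction n with
  | zero =>
      intro a
      rw [Finset.Icc_eq_empty (by omega)]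
      simp [z2_add_self]
  | succ n ih =>
      intro a
      have hsplit : Finset.Icc a (a + ((n + 1 : ℕ) : ℤ) - 1) =
          insert (a + (n : ℤ)) (Finset.Icc a (a + (n : ℤ) - 1)) := by
        ext j
        simp only [Finset.mem_Icc, Finset.mem_insert]
        push_cast
        omega
      rw [hsplit, Finset.sum_insert (by simp only [Finset.mem_Icc]; omega)]
      rw [ih a]
      rw [show a + ((n + 1 : ℕ) : ℤ) = a + (n : ℤ) + 1 by push_cast; ring]
      generalize g (a + (n : ℤ)) = p
      generalize g (a + (n : ℤ) + 1) = q
      generalize g a = r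
      revert p q r
      decide

section CoreLemmas

variable (χ : ℤ × ℤ → ZMod 2) (Rch : ℤ × ℤ → Prop) (R : ℤ)

lemma claim1 (hsuppH : ∀ x y, fHd χ Rch x y ≠ 0 → -R ≤ x ∧ x ≤ R - 1 ∧ |y| ≤ R - 1)
    (x y : ℤ) :
    encd χ Rch R x y = fHd χ Rch x y + encd χ Rch R (x + 1) y := by
  by_cases hx : x ≤ R + 1
  · rw [encd, ← Finset.Ioc_insert_left hx, Finset.sum_insert (by simp)]
    congr 1
    rw [encd]
    apply Finset.sum_congr _ (fun _ _ => rfl)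
    ext j
    simp only [Finset.mem_Ioc, Finset.mem_Icc]
    omega
  · have h1 : fHd χ Rch x y = 0 := by
      by_contra h
      have := hsuppH x y h
      omega
    rw [encd, encd, Finset.Icc_eq_empty (by omega), Finset.Icc_eq_empty (by omega), h1]
    simp

lemma claim2 (hsuppV : ∀ x y, fVd χ Rch x y ≠ 0 → |x| ≤ R - 1 ∧ -R ≤ y ∧ y ≤ R - 1)
    (heven : ∀ a b, fHd χ Rch a b + fHd χ Rch a (b + 1) + fVd χ Rch a b
      + fVd χ Rch (a + 1) b = 0)
    (x y : ℤ) :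
    encd χ Rch R x y + encd χ Rch R x (y + 1) = fVd χ Rch x y := by
  by_cases hx : x ≤ R + 1
  · have hsum : encd χ Rch R x y + encd χ Rch R x (y + 1) =
        ∑ j ∈ Finset.Icc x (R + 1), (fHd χ Rch j y + fHd χ Rch j (y + 1)) := by
      rw [encd, encd, ← Finset.sum_add_distrib]
    rw [hsum]
    have hpt : ∀ j, fHd χ Rch j y + fHd χ Rch j (y + 1) =
        fVd χ Rch j y + fVd χ Rch (j + 1) y := fun j => z2_rearr _ _ _ _ (heven j y)
    rw [Finset.sum_congr rfl (fun j _ => hpt j)]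
    obtain ⟨n, hn⟩ : ∃ n : ℕ, R + 1 = x + (n : ℤ) - 1 := ⟨(R + 2 - x).toNat, by omega⟩
    rw [hn, ztelescope (fun j => fVd χ Rch j y) n x]
    have hend : fVd χ Rch (x + (n : ℤ)) y = 0 := by
      by_contra h
      have h2 := (hsuppV _ _ h).1
      rw [abs_le] at h2
      omega
    rw [hend, add_zero]
  · have h0 : fVd χ Rch x y = 0 := by
      by_contra h
      have h2 := (hsuppV _ _ h).1
      rw [abs_le] at h2
      omega
    rw [encd, encd, Finset.Icc_eq_empty (by omega), h0]
    simp

lemma enc_top (hsuppH : ∀ x y, fHd χ Rch x y ≠ 0 → -R ≤ x ∧ x ≤ R - 1 ∧ |y| ≤ R - 1)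
    (hR : 1 ≤ R) (x : ℤ) : encd χ Rch R x (R + 1) = 0 := by
  rw [encd]
  apply Finset.sum_eq_zero
  intro j _
  by_contra h
  have h2 := (hsuppH _ _ h).2.2
  rw [abs_of_nonneg (by omega)] at h2
  omega

lemma enc_farleft_zero
    (hsuppH : ∀ x y, fHd χ Rch x y ≠ 0 → -R ≤ x ∧ x ≤ R - 1 ∧ |y| ≤ R - 1)
    (hsuppV : ∀ x y, fVd χ Rch x y ≠ 0 → |x| ≤ R - 1 ∧ -R ≤ y ∧ y ≤ R - 1)
    (heven : ∀ a b, fHd χ Rch a b + fHd χ Rch a (b + 1) + fVd χ Rch a b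
      + fVd χ Rch (a + 1) b = 0)
    (hR : 1 ≤ R) : encd χ Rch R (-(R + 2)) 0 = 0 := by
  have hstep : ∀ y : ℤ, encd χ Rch R (-(R + 2)) y = encd χ Rch R (-(R + 2)) (y + 1) := by
    intro y
    apply z2_eq_of_add_eq_zero
    rw [claim2 χ Rch R hsuppV heven]
    by_contra h
    have h2 := (hsuppV _ _ h).1
    rw [abs_of_nonpos (by omega)] at h2
    omega
  have hclimb : ∀ n : ℕ, encd χ Rch R (-(R + 2)) 0 = encd χ Rch R (-(R + 2)) (n : ℤ) := by
    intro n
    induction n with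
    | zero => norm_num
    | succ n ih =>
        rw [ih, show ((n + 1 : ℕ) : ℤ) = (n : ℤ) + 1 by push_cast; ring, ← hstep]
  have hh := hclimb (R + 1).toNat
  rw [show ((R + 1).toNat : ℤ) = R + 1 by omega] at hh
  rw [hh, enc_top χ Rch R hsuppH hR]

end CoreLemmas

/-- The abstract contour-parity core lemma. -/
lemma contour_core (χ : ℤ × ℤ → ZMod 2) (Rch : ℤ × ℤ → Prop) (R k : ℤ)
    (hR : 1 ≤ R)
    (hsupp : ∀ z, χ z = 1 → |z.1| ≤ R - 1 ∧ |z.2| ≤ R - 1)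
    (hk0 : χ (k, 0) = 1)
    (hkmax : ∀ j : ℤ, k < j → χ (j, 0) = 0)
    (hW : Rch (k, -1))
    (hRchH : ∀ x y : ℤ, χ (x, y) ≠ χ (x + 1, y) → (Rch (x, y - 1) ↔ Rch (x, y)))
    (hRchV : ∀ x y : ℤ, χ (x, y) ≠ χ (x, y + 1) → (Rch (x - 1, y) ↔ Rch (x, y)))
    (hcl : Relation.ReflTransGen (nbRel χ) (k, 0) (0, 0)) :
    ∃ j : ℤ, j ≤ -1 ∧ χ (j, 0) ≠ χ (j + 1, 0) ∧ Rch (j, -1) := by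
  have hsuppH : ∀ x y, fHd χ Rch x y ≠ 0 → -R ≤ x ∧ x ≤ R - 1 ∧ |y| ≤ R - 1 := by
    intro x y h
    have hbd : χ (x, y) ≠ χ (x + 1, y) := by
      by_contra hc
      rw [fHd, if_neg (by tauto)] at h
      exact h rfl
    rcases z2_one_of_ne hbd with h1 | h1 <;>
    · have h2 := hsupp _ h1
      simp only at h2
      obtain ⟨ha, hb⟩ := h2
      rw [abs_le] at ha
      refine ⟨by omega, by omega, hb⟩
  have hsuppV : ∀ x y, fVd χ Rch x y ≠ 0 → |x| ≤ R - 1 ∧ -R ≤ y ∧ y ≤ R - 1 := by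
    intro x y h
    have hbd : χ (x, y) ≠ χ (x, y + 1) := by
      by_contra hc
      rw [fVd, if_neg (by tauto)] at h
      exact h rfl
    rcases z2_one_of_ne hbd with h1 | h1 <;>
    · have h2 := hsupp _ h1
      simp only at h2
      obtain ⟨ha, hb⟩ := h2
      rw [abs_le] at hb
      refine ⟨ha, by omega, by omega⟩
  have heven : ∀ a b, fHd χ Rch a b + fHd χ Rch a (b + 1) + fVd χ Rch a b
      + fVd χ Rch (a + 1) b = 0 := by
    intro a b
    by_cases hr : Rch (a, b)
    · have e1 : fHd χ Rch a b = χ (a, b) + χ (a + 1, b) := by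
        rw [fHd]
        by_cases hbd : χ (a, b) ≠ χ (a + 1, b)
        · rw [if_pos ⟨hbd, (hRchH a b hbd).2 hr⟩]
          exact (z2_ne_iff.1 hbd).symm
        · rw [if_neg (by tauto)]
          push_neg at hbd
          rw [hbd]
          exact (z2_add_self _).symm
      have e2 : fHd χ Rch a (b + 1) = χ (a, b + 1) + χ (a + 1, b + 1) := by
        rw [fHd]
        by_cases hbd : χ (a, b + 1) ≠ χ (a + 1, b + 1)
        · rw [if_pos ⟨hbd, by rw [show b + 1 - 1 = b by ring]; exact hr⟩]
          exact (z2_ne_iff.1 hbd).symm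
        · rw [if_neg (by tauto)]
          push_neg at hbd
          rw [hbd]
          exact (z2_add_self _).symm
      have e3 : fVd χ Rch a b = χ (a, b) + χ (a, b + 1) := by
        rw [fVd]
        by_cases hbd : χ (a, b) ≠ χ (a, b + 1)
        · rw [if_pos ⟨hbd, (hRchV a b hbd).2 hr⟩]
          exact (z2_ne_iff.1 hbd).symm
        · rw [if_neg (by tauto)]
          push_neg at hbd
          rw [hbd]
          exact (z2_add_self _).symm
      have e4 : fVd χ Rch (a + 1) b = χ (a + 1, b) + χ (a + 1, b + 1) := by
        rw [fVd]
        by_cases hbd : χ (a + 1, b) ≠ χ (a + 1, b + 1)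
        · rw [if_pos ⟨hbd, by rw [show a + 1 - 1 = a by ring]; exact hr⟩]
          exact (z2_ne_iff.1 hbd).symm
        · rw [if_neg (by tauto)]
          push_neg at hbd
          rw [hbd]
          exact (z2_add_self _).symm
      rw [e1, e2, e3, e4]
      generalize χ (a, b) = p
      generalize χ (a + 1, b) = q
      generalize χ (a, b + 1) = r
      generalize χ (a + 1, b + 1) = s
      revert p q r s
      decide
    · have e1 : fHd χ Rch a b = 0 := by
        rw [fHd, if_neg]
        rintro ⟨hbd, hrr⟩
        exact hr ((hRchH a b hbd).1 hrr)
      have e2 : fHd χ Rch a (b + 1) = 0 := by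
        rw [fHd, if_neg]
        rintro ⟨hbd, hrr⟩
        rw [show b + 1 - 1 = b by ring] at hrr
        exact hr hrr
      have e3 : fVd χ Rch a b = 0 := by
        rw [fVd, if_neg]
        rintro ⟨hbd, hrr⟩
        exact hr ((hRchV a b hbd).1 hrr)
      have e4 : fVd χ Rch (a + 1) b = 0 := by
        rw [fVd, if_neg]
        rintro ⟨hbd, hrr⟩
        rw [show a + 1 - 1 = a by ring] at hrr
        exact hr hrr
      rw [e1, e2, e3, e4]
      decide
  -- enc at (k+1, 0) vanishes
  have henck1 : encd χ Rch R (k + 1) 0 = 0 := by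
    rw [encd]
    apply Finset.sum_eq_zero
    intro j hj
    simp only [Finset.mem_Icc] at hj
    rw [fHd, if_neg]
    rintro ⟨hbd, -⟩
    exact hbd (by rw [hkmax j (by omega), hkmax (j + 1) (by omega)])
  -- enc at (k, 0) is 1
  have henck : encd χ Rch R k 0 = 1 := by
    have hcond : χ (k, 0) ≠ χ (k + 1, 0) ∧ Rch (k, 0 - 1) := by
      constructor
      · rw [hk0, hkmax (k + 1) (by omega)]
        decide
      · rw [show (0 : ℤ) - 1 = -1 by ring]
        exact hW
    rw [claim1 χ Rch R hsuppH, henck1, add_zero, fHd, if_pos hcond]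
  -- enc is invariant along non-boundary bonds
  have hnb : ∀ z w : ℤ × ℤ, nbRel χ z w →
      encd χ Rch R z.1 z.2 = encd χ Rch R w.1 w.2 := by
    intro z w h
    rcases h with ⟨x, y, hzw, hbd⟩ | ⟨x, y, hzw, hbd⟩
    · have hf : fHd χ Rch x y = 0 := by
        rw [fHd, if_neg]
        tauto
      have h1 : encd χ Rch R x y = encd χ Rch R (x + 1) y := by
        rw [claim1 χ Rch R hsuppH x y, hf, zero_add]
      rcases hzw with ⟨rfl, rfl⟩ | ⟨rfl, rfl⟩
      · simpa using h1
      · simpa using h1.symm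
    · have hf : fVd χ Rch x y = 0 := by
        rw [fVd, if_neg]
        tauto
      have h1 : encd χ Rch R x y = encd χ Rch R x (y + 1) :=
        z2_eq_of_add_eq_zero (by rw [claim2 χ Rch R hsuppV heven, hf])
      rcases hzw with ⟨rfl, rfl⟩ | ⟨rfl, rfl⟩
      · simpa using h1
      · simpa using h1.symm
  have hconst : ∀ z w : ℤ × ℤ, Relation.ReflTransGen (nbRel χ) z w →
      encd χ Rch R z.1 z.2 = encd χ Rch R w.1 w.2 := by
    intro z w h
    induction h with
    | refl => rfl
    | tail hpref hstep ih => rw [ih]; exact hnb _ _ hstep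
  have henc0 : encd χ Rch R 0 0 = 1 := by
    have hcc := hconst _ _ hcl
    simp only at hcc
    rw [← hcc]
    exact henck
  have hfar : encd χ Rch R (-(R + 2)) 0 = 0 :=
    enc_farleft_zero χ Rch R hsuppH hsuppV heven hR
  -- the negative-axis sum is 1
  have hsplit : ∑ j ∈ Finset.Icc (-(R + 2)) (-1 : ℤ), fHd χ Rch j 0 = 1 := by
    have hunion : Finset.Icc (-(R + 2)) (R + 1 : ℤ) =
        Finset.Icc (-(R + 2)) (-1 : ℤ) ∪ Finset.Icc (0 : ℤ) (R + 1) := by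
      ext j
      simp only [Finset.mem_Icc, Finset.mem_union]
      omega
    have hdisj : Disjoint (Finset.Icc (-(R + 2)) (-1 : ℤ)) (Finset.Icc (0 : ℤ) (R + 1)) := by
      rw [Finset.disjoint_left]
      intro j hj hj2
      simp only [Finset.mem_Icc] at hj hj2
      omega
    have hdec : encd χ Rch R (-(R + 2)) 0 =
        (∑ j ∈ Finset.Icc (-(R + 2)) (-1 : ℤ), fHd χ Rch j 0) + encd χ Rch R 0 0 := by
      rw [encd, hunion, Finset.sum_union hdisj]
      rfl
    rw [hfar, henc0] at hdec
    exact z2_eq_of_add_eq_zero hdec.symm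
  obtain ⟨j, hjmem, hj1⟩ : ∃ j ∈ Finset.Icc (-(R + 2)) (-1 : ℤ), fHd χ Rch j 0 ≠ 0 := by
    apply Finset.exists_ne_zero_of_sum_ne_zero
    rw [hsplit]
    decide
  have hcond : χ (j, 0) ≠ χ (j + 1, 0) ∧ Rch (j, 0 - 1) := by
    by_contra hc
    rw [fHd, if_neg hc] at hj1
    exact hj1 rfl
  simp only [Finset.mem_Icc] at hjmem
  exact ⟨j, by omega, hcond.1, by rw [show (0 : ℤ) - 1 = -1 by ring] at hcond; exact hcond.2⟩

end ContourCore
section Supercrit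

/-- Embedding of the plane `ℤ²` into `ℤ^d`. -/
def pl (d : ℕ) (z : ℤ × ℤ) : Zd d :=
  fun j => if (j : ℕ) = 0 then z.1 else if (j : ℕ) = 1 then z.2 else 0

/-- The (big-lattice) bond at plane position `(x,y)`, horizontal (`dir = false`)
or vertical (`dir = true`). -/
def pbond (d : ℕ) (hd : 2 ≤ d) (x y : ℤ) (dir : Bool) : Zd d × Fin d :=
  (pl d (x, y), if dir then (⟨1, by omega⟩ : Fin d) else (⟨0, by omega⟩ : Fin d))

lemma pl_zero (d : ℕ) : pl d (0, 0) = 0 := by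
  funext j
  simp only [pl]
  split_ifs <;> rfl

lemma pl_inj (d : ℕ) (hd : 2 ≤ d) : Function.Injective (pl d) := by
  rintro ⟨a1, a2⟩ ⟨b1, b2⟩ h
  have h0 := congrFun h ⟨0, by omega⟩
  have h1 := congrFun h ⟨1, by omega⟩
  simp only [pl] at h0 h1
  norm_num at h0 h1
  simp [h0, h1]

lemma pl_add_H (d : ℕ) (hd : 2 ≤ d) (x y : ℤ) :
    pl d (x + 1, y) = pl d (x, y) + unitV d ⟨0, by omega⟩ := by
  funext j
  simp only [pl, unitV, Pi.add_apply]
  by_cases h0 : (j : ℕ) = 0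
  · have hj : j = (⟨0, by omega⟩ : Fin d) := by
      apply Fin.ext
      exact h0
    rw [if_pos h0, if_pos h0, if_pos hj]
  · have hj : j ≠ (⟨0, by omega⟩ : Fin d) := by
      intro hc
      exact h0 (by rw [hc])
    rw [if_neg h0, if_neg h0, if_neg hj, add_zero]

lemma pl_add_V (d : ℕ) (hd : 2 ≤ d) (x y : ℤ) :
    pl d (x, y + 1) = pl d (x, y) + unitV d ⟨1, by omega⟩ := by
  funext j
  simp only [pl, unitV, Pi.add_apply]
  by_cases h0 : (j : ℕ) = 0
  · have hj : j ≠ (⟨1, by omega⟩ : Fin d) := by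
      intro hc
      rw [hc] at h0
      exact absurd h0 (by norm_num)
    rw [if_pos h0, if_pos h0, if_neg hj, add_zero]
  · by_cases h1 : (j : ℕ) = 1
    · have hj : j = (⟨1, by omega⟩ : Fin d) := by
        apply Fin.ext
        exact h1
      rw [if_neg h0, if_neg h0, if_pos h1, if_pos h1, if_pos hj]
    · have hj : j ≠ (⟨1, by omega⟩ : Fin d) := by
        intro hc
        exact h1 (by rw [hc])
      rw [if_neg h0, if_neg h0, if_neg h1, if_neg h1, if_neg hj, add_zero]

/-- Plane adjacency through an open bond. -/
def padj (d : ℕ) (hd : 2 ≤ d) (ω : Config d) (z w : ℤ × ℤ) : Prop :=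
  (∃ x y : ℤ, ((z = (x, y) ∧ w = (x + 1, y)) ∨ (w = (x, y) ∧ z = (x + 1, y))) ∧
    ω (pbond d hd x y false) = true) ∨
  (∃ x y : ℤ, ((z = (x, y) ∧ w = (x, y + 1)) ∨ (w = (x, y) ∧ z = (x, y + 1))) ∧
    ω (pbond d hd x y true) = true)

/-- The plane cluster of the origin. -/
def planeC (d : ℕ) (hd : 2 ≤ d) (ω : Config d) : Set (ℤ × ℤ) :=
  {z | Relation.ReflTransGen (padj d hd ω) (0, 0) z}

lemma padj_symm (d : ℕ) (hd : 2 ≤ d) (ω : Config d) :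
    Symmetric (padj d hd ω) := by
  rintro z w (⟨x, y, hf, hb⟩ | ⟨x, y, hf, hb⟩)
  · exact Or.inl ⟨x, y, by tauto, hb⟩
  · exact Or.inr ⟨x, y, by tauto, hb⟩

lemma padj_edgeOpen (d : ℕ) (hd : 2 ≤ d) (ω : Config d) {z w : ℤ × ℤ}
    (h : padj d hd ω z w) : edgeOpen ω (pl d z) (pl d w) := by
  rcases h with ⟨x, y, hf, hb⟩ | ⟨x, y, hf, hb⟩
  · rcases hf with ⟨rfl, rfl⟩ | ⟨rfl, rfl⟩
    · exact Or.inl ⟨⟨0, by omega⟩, pl_add_H d hd x y, hb⟩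
    · exact Or.inr ⟨⟨0, by omega⟩, pl_add_H d hd x y, hb⟩
  · rcases hf with ⟨rfl, rfl⟩ | ⟨rfl, rfl⟩
    · exact Or.inl ⟨⟨1, by omega⟩, pl_add_V d hd x y, hb⟩
    · exact Or.inr ⟨⟨1, by omega⟩, pl_add_V d hd x y, hb⟩

lemma planeC_subset_cluster (d : ℕ) (hd : 2 ≤ d) (ω : Config d) {z : ℤ × ℤ}
    (h : z ∈ planeC d hd ω) : pl d z ∈ cluster ω 0 := by
  have : Relation.ReflTransGen (fun a b => edgeOpen ω a b) (pl d (0, 0)) (pl d z) := by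
    induction h with
    | refl => exact Relation.ReflTransGen.refl
    | tail hpref hstep ih => exact ih.tail (padj_edgeOpen d hd ω hstep)
  rwa [pl_zero] at this

lemma plane_infinite_mem (d : ℕ) (hd : 2 ≤ d) (ω : Config d)
    (h : (planeC d hd ω).Infinite) : ω ∈ InfiniteCluster0 d := by
  have h1 : (pl d '' (planeC d hd ω)).Infinite :=
    h.image ((pl_inj d hd).injOn)
  apply Set.Infinite.mono _ h1
  rintro - ⟨z, hz, rfl⟩
  exact planeC_subset_cluster d hd ω hz

/-- Cluster indicator in `ZMod 2`. -/
noncomputable def chiC (d : ℕ) (hd : 2 ≤ d) (ω : Config d) : ℤ × ℤ → ZMod 2 :=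
  fun z => if z ∈ planeC d hd ω then 1 else 0

lemma chi_step (d : ℕ) (hd : 2 ≤ d) (ω : Config d) {z w : ℤ × ℤ}
    (h : padj d hd ω z w) : z ∈ planeC d hd ω ↔ w ∈ planeC d hd ω :=
  ⟨fun hz => hz.tail h, fun hw => hw.tail (padj_symm d hd ω h)⟩

lemma closedH (d : ℕ) (hd : 2 ≤ d) (ω : Config d) (x y : ℤ)
    (h : chiC d hd ω (x, y) ≠ chiC d hd ω (x + 1, y)) :
    ω (pbond d hd x y false) = false := by
  by_contra hc
  have hopen : ω (pbond d hd x y false) = true := by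
    cases hh : ω (pbond d hd x y false)
    · exact absurd hh hc
    · rfl
  have hadj : padj d hd ω (x, y) (x + 1, y) :=
    Or.inl ⟨x, y, Or.inl ⟨rfl, rfl⟩, hopen⟩
  have hiff := chi_step d hd ω hadj
  apply h
  simp only [chiC]
  by_cases hz : (x, y) ∈ planeC d hd ω
  · rw [if_pos hz, if_pos (hiff.1 hz)]
  · rw [if_neg hz, if_neg (fun hw => hz (hiff.2 hw))]

lemma closedV (d : ℕ) (hd : 2 ≤ d) (ω : Config d) (x y : ℤ)
    (h : chiC d hd ω (x, y) ≠ chiC d hd ω (x, y + 1)) :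
    ω (pbond d hd x y true) = false := by
  by_contra hc
  have hopen : ω (pbond d hd x y true) = true := by
    cases hh : ω (pbond d hd x y true)
    · exact absurd hh hc
    · rfl
  have hadj : padj d hd ω (x, y) (x, y + 1) :=
    Or.inr ⟨x, y, Or.inl ⟨rfl, rfl⟩, hopen⟩
  have hiff := chi_step d hd ω hadj
  apply h
  simp only [chiC]
  by_cases hz : (x, y) ∈ planeC d hd ω
  · rw [if_pos hz, if_pos (hiff.1 hz)]
  · rw [if_neg hz, if_neg (fun hw => hz (hiff.2 hw))]

/-- Dual walk moves. -/
def moveD : ℤ × ℤ → Bool × Bool → ℤ × ℤ := fun u s =>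
  match s with
  | (false, true) => (u.1 + 1, u.2)
  | (false, false) => (u.1 - 1, u.2)
  | (true, true) => (u.1, u.2 + 1)
  | (true, false) => (u.1, u.2 - 1)

/-- The (big-lattice) bond crossed by a dual step. -/
def dbond (d : ℕ) (hd : 2 ≤ d) : ℤ × ℤ → Bool × Bool → Zd d × Fin d := fun u s =>
  match s with
  | (false, true) => pbond d hd (u.1 + 1) u.2 true
  | (false, false) => pbond d hd u.1 u.2 true
  | (true, true) => pbond d hd u.1 (u.2 + 1) false
  | (true, false) => pbond d hd u.1 u.2 false

/-- The step crosses a boundary bond. -/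
def dgood (d : ℕ) (hd : 2 ≤ d) (ω : Config d) : ℤ × ℤ → Bool × Bool → Prop := fun u s =>
  match s with
  | (false, true) => chiC d hd ω (u.1 + 1, u.2) ≠ chiC d hd ω (u.1 + 1, u.2 + 1)
  | (false, false) => chiC d hd ω (u.1, u.2) ≠ chiC d hd ω (u.1, u.2 + 1)
  | (true, true) => chiC d hd ω (u.1, u.2 + 1) ≠ chiC d hd ω (u.1 + 1, u.2 + 1)
  | (true, false) => chiC d hd ω (u.1, u.2) ≠ chiC d hd ω (u.1 + 1, u.2)

lemma pbond_inj (d : ℕ) (hd : 2 ≤ d) {x y x' y' : ℤ} {dir dir' : Bool}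
    (h : pbond d hd x y dir = pbond d hd x' y' dir') : x = x' ∧ y = y' ∧ dir = dir' := by
  rw [pbond, pbond, Prod.mk.injEq] at h
  obtain ⟨h1, h2⟩ := h
  have hxy := pl_inj d hd h1
  rw [Prod.mk.injEq] at hxy
  refine ⟨hxy.1, hxy.2, ?_⟩
  cases dir <;> cases dir'
  · rfl
  · exfalso; rw [if_neg (by simp), if_pos rfl, Fin.mk.injEq] at h2; omega
  · exfalso; rw [if_pos rfl, if_neg (by simp), Fin.mk.injEq] at h2; omega
  · rfl

lemma pairD (d : ℕ) (hd : 2 ≤ d) : ∀ (u : ℤ × ℤ) s u' s',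
    dbond d hd u s = dbond d hd u' s' →
    (u = u' ∧ moveD u s = moveD u' s') ∨ (u = moveD u' s' ∧ moveD u s = u') := by
  rintro ⟨a, b⟩ ⟨s1, s2⟩ ⟨a', b'⟩ ⟨s1', s2'⟩ h
  cases s1 <;> cases s2 <;> cases s1' <;> cases s2' <;>
    simp only [dbond] at h <;>
    obtain ⟨hx, hy, hdir⟩ := pbond_inj d hd h <;>
    simp only [moveD, Prod.mk.injEq] <;>
    first
      | (exact Bool.noConfusion hdir)
      | (left; refine ⟨⟨by omega, by omega⟩, by omega, by omega⟩)
      | (right; refine ⟨⟨by omega, by omega⟩, by omega, by omega⟩)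

lemma coordD : ∀ (u : ℤ × ℤ) (s : Bool × Bool), |(moveD u s).1 - u.1| ≤ 1 := by
  rintro ⟨a, b⟩ ⟨s1, s2⟩
  cases s1 <;> cases s2 <;> simp [moveD]

end Supercrit
section SupercritMain

lemma nbRel_symm (χ : ℤ × ℤ → ZMod 2) : Symmetric (nbRel χ) := by
  rintro z w (⟨x, y, hf, he⟩ | ⟨x, y, hf, he⟩)
  · exact Or.inl ⟨x, y, by tauto, he⟩
  · exact Or.inr ⟨x, y, by tauto, he⟩

lemma dgood_closed (d : ℕ) (hd : 2 ≤ d) (ω : Config d) (u : ℤ × ℤ) (s : Bool × Bool)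
    (h : dgood d hd ω u s) : ω (dbond d hd u s) = false := by
  obtain ⟨s1, s2⟩ := s
  cases s1 <;> cases s2
  · exact closedV d hd ω u.1 u.2 h
  · exact closedV d hd ω (u.1 + 1) u.2 h
  · exact closedH d hd ω u.1 u.2 h
  · exact closedH d hd ω u.1 (u.2 + 1) h

set_option maxHeartbeats 1000000 in
theorem finite_plane_mem_union (d : ℕ) (hd : 2 ≤ d) (ω : Config d)
    (hfin : (planeC d hd ω).Finite) :
    ω ∈ ⋃ (k : ℕ) (m : ℕ) (σF : Fin (k + 1 + m) → Bool × Bool),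
      wEvent moveD (dbond d hd) (((k : ℕ) : ℤ), -1) false (k + 1 + m) σF := by
  classical
  -- coordinate bound for the cluster
  have hmemT : ∀ z, z ∈ planeC d hd ω ↔ z ∈ hfin.toFinset :=
    fun z => (Set.Finite.mem_toFinset hfin).symm
  set RcN : ℕ := hfin.toFinset.sup (fun z => z.1.natAbs ⊔ z.2.natAbs) with hRcN
  set R : ℤ := (RcN : ℤ) + 1 with hRdef
  have hR : 1 ≤ R := by omega
  have hbound : ∀ z ∈ planeC d hd ω, |z.1| ≤ (RcN : ℤ) ∧ |z.2| ≤ (RcN : ℤ) := by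
    intro z hz
    have hle := Finset.le_sup (f := fun z : ℤ × ℤ => z.1.natAbs ⊔ z.2.natAbs)
      ((hmemT z).1 hz)
    constructor
    · rw [Int.abs_eq_natAbs]
      exact_mod_cast le_trans le_sup_left hle
    · rw [Int.abs_eq_natAbs]
      exact_mod_cast le_trans le_sup_right hle
  have hchi_one : ∀ z, chiC d hd ω z = 1 → z ∈ planeC d hd ω := by
    intro z hz
    by_contra hc
    simp only [chiC, if_neg hc] at hz
    exact absurd hz (by decide)
  have hsupp : ∀ z, chiC d hd ω z = 1 → |z.1| ≤ R - 1 ∧ |z.2| ≤ R - 1 := by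
    intro z hz
    have := hbound z (hchi_one z hz)
    omega
  -- the rightmost point of the cluster on the axis
  have h00 : (0, 0) ∈ planeC d hd ω := Relation.ReflTransGen.refl
  have hAmem : (0 : ℤ) ∈ (hfin.toFinset.filter (fun z => z.2 = 0)).image Prod.fst :=
    Finset.mem_image.2 ⟨(0, 0), Finset.mem_filter.2 ⟨(hmemT _).1 h00, rfl⟩, rfl⟩
  have hAne : ((hfin.toFinset.filter (fun z => z.2 = 0)).image Prod.fst).Nonempty :=
    ⟨0, hAmem⟩
  set k : ℤ := ((hfin.toFinset.filter (fun z => z.2 = 0)).image Prod.fst).max' hAne with hk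
  have hkC : (k, 0) ∈ planeC d hd ω := by
    have hmem := Finset.max'_mem _ hAne
    rw [← hk] at hmem
    obtain ⟨z, hz, hz1⟩ := Finset.mem_image.1 hmem
    obtain ⟨hzT, hz2⟩ := Finset.mem_filter.1 hz
    have hzz : z = (k, 0) := by
      obtain ⟨z1, z2⟩ := z
      simp only at hz1 hz2
      rw [hz1, hz2]
    rw [← hzz]
    exact (hmemT z).2 hzT
  have hk0 : chiC d hd ω (k, 0) = 1 := by
    simp only [chiC, if_pos hkC]
  have hkmax : ∀ j : ℤ, k < j → chiC d hd ω (j, 0) = 0 := by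
    intro j hj
    simp only [chiC]
    rw [if_neg]
    intro hc
    have hjA : j ∈ (hfin.toFinset.filter (fun z => z.2 = 0)).image Prod.fst :=
      Finset.mem_image.2 ⟨(j, 0), Finset.mem_filter.2 ⟨(hmemT _).1 hc, rfl⟩, rfl⟩
    have := Finset.le_max' _ j hjA
    omega
  have hknn : (0 : ℤ) ≤ k := Finset.le_max' _ 0 hAmem
  -- the reachability predicate
  set dstep : ℤ × ℤ → ℤ × ℤ → Prop :=
    fun u v => ∃ s, moveD u s = v ∧ dgood d hd ω u s with hdstep
  set Rch : ℤ × ℤ → Prop := fun u => Relation.ReflTransGen dstep (k, -1) u with hRch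
  have hW : Rch (k, -1) := Relation.ReflTransGen.refl
  have hRchH : ∀ x y : ℤ, chiC d hd ω (x, y) ≠ chiC d hd ω (x + 1, y) →
      (Rch (x, y - 1) ↔ Rch (x, y)) := by
    intro x y hbd
    constructor
    · intro h
      apply h.tail
      refine ⟨(true, true), ?_, ?_⟩
      · show moveD (x, y - 1) (true, true) = (x, y)
        simp only [moveD]
        rw [Prod.mk.injEq]
        exact ⟨rfl, by ring⟩
      · show chiC d hd ω (x, y - 1 + 1) ≠ chiC d hd ω (x + 1, y - 1 + 1)
        rw [show y - 1 + 1 = y by ring]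
        exact hbd
    · intro h
      apply h.tail
      refine ⟨(true, false), ?_, ?_⟩
      · show moveD (x, y) (true, false) = (x, y - 1)
        rfl
      · exact hbd
  have hRchV : ∀ x y : ℤ, chiC d hd ω (x, y) ≠ chiC d hd ω (x, y + 1) →
      (Rch (x - 1, y) ↔ Rch (x, y)) := by
    intro x y hbd
    constructor
    · intro h
      apply h.tail
      refine ⟨(false, true), ?_, ?_⟩
      · show moveD (x - 1, y) (false, true) = (x, y)
        simp only [moveD]
        rw [Prod.mk.injEq]
        exact ⟨by ring, rfl⟩
      · show chiC d hd ω (x - 1 + 1, y) ≠ chiC d hd ω (x - 1 + 1, y + 1)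
        rw [show x - 1 + 1 = x by ring]
        exact hbd
    · intro h
      apply h.tail
      refine ⟨(false, false), ?_, ?_⟩
      · show moveD (x, y) (false, false) = (x - 1, y)
        rfl
      · exact hbd
  -- connection from (k,0) back to the origin through non-boundary bonds
  have hforward : ∀ z ∈ planeC d hd ω,
      Relation.ReflTransGen (nbRel (chiC d hd ω)) (0, 0) z := by
    intro z hz
    induction hz with
    | refl => exact Relation.ReflTransGen.refl
    | @tail b c hpref hstep ih =>
        have hbC : b ∈ planeC d hd ω := hpref
        have hcC : c ∈ planeC d hd ω := hbC.tail hstep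
        apply ih.tail
        have hchis : ∀ v w : ℤ × ℤ, v ∈ planeC d hd ω → w ∈ planeC d hd ω →
            chiC d hd ω v = chiC d hd ω w := by
          intro v w hv hw
          simp only [chiC, if_pos hv, if_pos hw]
        rcases hstep with ⟨x, y, hf, hbond⟩ | ⟨x, y, hf, hbond⟩
        · refine Or.inl ⟨x, y, hf, ?_⟩
          rcases hf with ⟨h1, h2⟩ | ⟨h1, h2⟩
          · exact hchis _ _ (h1 ▸ hbC) (h2 ▸ hcC)
          · exact hchis _ _ (h1 ▸ hcC) (h2 ▸ hbC)
        · refine Or.inr ⟨x, y, hf, ?_⟩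
          rcases hf with ⟨h1, h2⟩ | ⟨h1, h2⟩
          · exact hchis _ _ (h1 ▸ hbC) (h2 ▸ hcC)
          · exact hchis _ _ (h1 ▸ hcC) (h2 ▸ hbC)
  have hcl : Relation.ReflTransGen (nbRel (chiC d hd ω)) (k, 0) (0, 0) :=
    (@Relation.ReflTransGen.symmetric _ _ ⟨fun _ _ h => nbRel_symm (chiC d hd ω) h⟩).symm _ _ (hforward _ hkC)
  -- apply the contour core
  obtain ⟨j, hj, hbdj, hRj⟩ :=
    contour_core (chiC d hd ω) Rch R k hR hsupp hk0 hkmax hW hRchH hRchV hcl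
  -- a self-avoiding dual walk from (k,-1) to (j,-1)
  haveI : Nonempty (Bool × Bool) := inferInstance
  obtain ⟨ℓ, σ, hend, hgood, hnd⟩ :=
    exists_nodup_walk moveD (dgood d hd ω) ((k, -1) : ℤ × ℤ) ((j, -1) : ℤ × ℤ)
      (walk_of_rtg moveD (dgood d hd ω) dstep (fun u v hv => hv) hRj)
  have hlen : k + 1 ≤ (ℓ : ℤ) := by
    have hco := wpos_coord moveD Prod.fst coordD ((k, -1) : ℤ × ℤ) σ ℓ
    rw [hend] at hco
    simp only at hco
    rw [abs_le] at hco
    omega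
  set kN : ℕ := k.toNat with hkN
  have hkNz : (kN : ℤ) = k := Int.toNat_of_nonneg hknn
  have hℓ : kN + 1 ≤ ℓ := by omega
  refine Set.mem_iUnion.2 ⟨kN, Set.mem_iUnion.2 ⟨ℓ - (kN + 1), ?_⟩⟩
  have hshape : kN + 1 + (ℓ - (kN + 1)) = ℓ := by omega
  rw [hshape, hkNz]
  refine Set.mem_iUnion.2 ⟨fun t => σ t.val, ?_⟩
  exact mem_wEvent moveD (dbond d hd) ((k, -1) : ℤ × ℤ) false ℓ σ hnd ω
    (fun t ht => dgood_closed d hd ω _ _ (hgood t ht))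

end SupercritMain
section SupercritProb

theorem supercrit (d : ℕ) (hd : 2 ≤ d) {Q : Measure (Config d)} {p : ℝ}
    (hQ : IsBernoulli Q p) (hp : 99 / 100 ≤ p) : Q (InfiniteCluster0 d) ≠ 0 := by
  classical
  haveI hPM : IsProbabilityMeasure Q := hQ.1
  set U := ⋃ (k : ℕ) (m : ℕ) (σF : Fin (k + 1 + m) → Bool × Bool),
    wEvent moveD (dbond d hd) (((k : ℕ) : ℤ), -1) false (k + 1 + m) σF with hU
  have hcover : (Set.univ : Set (Config d)) ⊆ InfiniteCluster0 d ∪ U := by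
    intro ω _
    by_cases hfin : (planeC d hd ω).Finite
    · exact Or.inr (finite_plane_mem_union d hd ω hfin)
    · exact Or.inl (plane_infinite_mem d hd ω hfin)
  -- arithmetic preliminaries
  have hq : ENNReal.ofReal (if (false : Bool) then p else 1 - p) = ENNReal.ofReal (1 - p) := by
    norm_num
  set r : ℝ≥0∞ := (Fintype.card (Bool × Bool) : ℝ≥0∞) * ENNReal.ofReal (1 - p) with hr
  have hcard4 : ((Fintype.card (Bool × Bool) : ℕ) : ℝ≥0∞) = ENNReal.ofReal 4 := by
    rw [show Fintype.card (Bool × Bool) = 4 by simp]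
    rw [ENNReal.ofReal_ofNat]
    norm_num
  have hr25 : r ≤ ENNReal.ofReal (4 / 100) := by
    rw [hr, hcard4, ← ENNReal.ofReal_mul (by norm_num)]
    apply ENNReal.ofReal_le_ofReal
    nlinarith
  have hrle : r ≤ 2⁻¹ := by
    refine le_trans hr25 ?_
    rw [show (2⁻¹ : ℝ≥0∞) = ENNReal.ofReal (1 / 2) by
      rw [one_div, ENNReal.ofReal_inv_of_pos (by norm_num : (0 : ℝ) < 2)]
      norm_num]
    exact ENNReal.ofReal_le_ofReal (by norm_num)
  have hinv : (1 - r)⁻¹ ≤ 2 := by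
    have h1 : (2⁻¹ : ℝ≥0∞) ≤ 1 - r := by
      refine ENNReal.le_sub_of_add_le_right ?_ ?_
      · rw [hr]
        exact ENNReal.mul_ne_top (by simp) ENNReal.ofReal_ne_top
      · calc (2⁻¹ : ℝ≥0∞) + r ≤ 2⁻¹ + 2⁻¹ := add_le_add le_rfl hrle
          _ = 1 := ENNReal.inv_two_add_inv_two
    calc (1 - r)⁻¹ ≤ ((2 : ℝ≥0∞)⁻¹)⁻¹ := by
          apply ENNReal.inv_le_inv.2 h1
      _ = 2 := by rw [inv_inv]
  -- the union bound
  have hUb : Q U ≤ ENNReal.ofReal (16 / 100) := by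
    have h1 : Q U ≤ ∑' k : ℕ, r ^ (k + 1) * (1 - r)⁻¹ := by
      rw [hU]
      refine le_trans (measure_iUnion_le _) (ENNReal.tsum_le_tsum (fun k => ?_))
      have := union_prob moveD (dbond d hd) (pairD d hd) hQ
        ((((k : ℕ) : ℤ), -1) : ℤ × ℤ) false (k + 1)
      rw [hq] at this
      exact this
    have h2 : (∑' k : ℕ, r ^ (k + 1) * (1 - r)⁻¹) = (r * (1 - r)⁻¹) * (1 - r)⁻¹ := by
      rw [ENNReal.tsum_mul_right]
      congr 1
      have : ∀ k : ℕ, r ^ (k + 1) = r * r ^ k := fun k => pow_succ' r k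
      rw [tsum_congr this, ENNReal.tsum_mul_left, ENNReal.tsum_geometric]
    have h3 : (r * (1 - r)⁻¹) * (1 - r)⁻¹ ≤ (r * 2) * 2 :=
      mul_le_mul' (mul_le_mul' le_rfl hinv) hinv
    have h4 : (r * 2) * 2 ≤ ENNReal.ofReal (16 / 100) := by
      calc (r * 2) * 2 = r * 4 := by ring
        _ ≤ ENNReal.ofReal (4 / 100) * 4 := mul_le_mul' hr25 le_rfl
        _ = ENNReal.ofReal (4 / 100) * ENNReal.ofReal 4 := by
            rw [ENNReal.ofReal_ofNat]
        _ = ENNReal.ofReal ((4 / 100) * 4) := (ENNReal.ofReal_mul (by norm_num)).symm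
        _ = ENNReal.ofReal (16 / 100) := by norm_num
    calc Q U ≤ (r * (1 - r)⁻¹) * (1 - r)⁻¹ := le_trans h1 (le_of_eq h2)
      _ ≤ ENNReal.ofReal (16 / 100) := le_trans h3 h4
  -- conclude
  intro h0
  have h1 : (1 : ℝ≥0∞) ≤ ENNReal.ofReal (16 / 100) := by
    calc (1 : ℝ≥0∞) = Q Set.univ := (measure_univ).symm
      _ ≤ Q (InfiniteCluster0 d ∪ U) := measure_mono hcover
      _ ≤ Q (InfiniteCluster0 d) + Q U := measure_union_le _ _
      _ = Q U := by rw [h0, zero_add]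
      _ ≤ ENNReal.ofReal (16 / 100) := hUb
  have h2 : ENNReal.ofReal (16 / 100) < 1 := ENNReal.ofReal_lt_one.2 (by norm_num)
  exact absurd h1 (not_le.2 h2)

end SupercritProb

/-- for every `d ≥ 2`, the critical probability of Bernoulli bond
percolation on `ℤ^d` satisfies `0 < p_c < 1`. -/
theorem pc_pos_lt_one (d : ℕ) (hd : 2 ≤ d)
    (Qf : ℝ → MeasureTheory.Measure (Config d))
    (hQf : ∀ p ∈ Set.Icc (0 : ℝ) 1, IsBernoulli (Qf p) p) :
    0 < pcOf Qf ∧ pcOf Qf < 1 := by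
  have hd2 : (2 : ℝ) ≤ (d : ℝ) := by exact_mod_cast hd
  have hpl : (0 : ℝ) < 1 / (4 * (d : ℝ)) := by positivity
  have hple : 1 / (4 * (d : ℝ)) ≤ 1 := by
    rw [div_le_one (by positivity)]
    linarith
  have hmem : (1 / (4 * (d : ℝ))) ∈
      {p : ℝ | p ∈ Set.Icc (0 : ℝ) 1 ∧ Qf p (InfiniteCluster0 d) = 0} :=
    ⟨⟨le_of_lt hpl, hple⟩, subcrit d hd (hQf _ ⟨le_of_lt hpl, hple⟩)⟩
  have hbdd : BddAbove {p : ℝ | p ∈ Set.Icc (0 : ℝ) 1 ∧ Qf p (InfiniteCluster0 d) = 0} :=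
    ⟨1, fun x hx => hx.1.2⟩
  constructor
  · rw [pcOf]
    exact lt_of_lt_of_le hpl (le_csSup hbdd hmem)
  · rw [pcOf]
    have hub : ∀ x ∈ {p : ℝ | p ∈ Set.Icc (0 : ℝ) 1 ∧ Qf p (InfiniteCluster0 d) = 0},
        x ≤ 99 / 100 := by
      intro x hx
      by_contra hc
      push_neg at hc
      exact supercrit d hd (hQf x hx.1) (le_of_lt hc) hx.2
    exact lt_of_le_of_lt (csSup_le ⟨_, hmem⟩ hub) (by norm_num)

end PercWalk
end

section
/- Integration by parts formula: for any square-integrable random field v on Ω × B and any local function u: Ω → R, one has ∫ v ∇^{(ω)}u dM = − Q[ n^ω(0) u(ω) ∇^{(ω)*}v(ω) 1_{#C_0(ω)=∞} ], where ∇^{(ω)*}v(ω) = (1/n^ω(0)) Σ_{b∈B} ω(b)(v(ω,b) − v(b.ω, −b)). -/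
open MeasureTheory Filter Topology
open scoped ENNReal NNReal Classical

namespace PercWalk

section AuxLemmas

variable {d : ℕ}

@[simp] lemma shift_shift (x y : Zd d) (ω : Config d) :
    shift x (shift y ω) = shift (y + x) ω := by
  funext p; simp [shift, add_assoc]

@[simp] lemma shift_zero (ω : Config d) : shift (0 : Zd d) ω = ω := by
  funext p; simp [shift]

lemma measurable_shift (x : Zd d) : Measurable (shift x : Config d → Config d) := by
  apply measurable_pi_lambda
  intro a
  exact measurable_pi_apply _

lemma edgeOpen_shift (x : Zd d) (ω : Config d) (a b : Zd d) :
    edgeOpen (shift x ω) a b ↔ edgeOpen ω (x + a) (x + b) := by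
  unfold edgeOpen shift
  constructor
  · rintro (⟨i, h1, h2⟩ | ⟨i, h1, h2⟩)
    · exact Or.inl ⟨i, by rw [h1]; ring, h2⟩
    · exact Or.inr ⟨i, by rw [h1]; ring, h2⟩
  · rintro (⟨i, h1, h2⟩ | ⟨i, h1, h2⟩)
    · refine Or.inl ⟨i, ?_, h2⟩
      have : x + b = x + (a + unitV d i) := by rw [h1]; ring
      exact add_left_cancel this
    · refine Or.inr ⟨i, ?_, h2⟩
      have : x + a = x + (b + unitV d i) := by rw [h1]; ring
      exact add_left_cancel this

lemma edgeOpen_comm (ω : Config d) (a b : Zd d) :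
    edgeOpen ω a b ↔ edgeOpen ω b a := by
  unfold edgeOpen; exact or_comm

lemma mem_cluster_shift (x : Zd d) (ω : Config d) (z y : Zd d) :
    y ∈ cluster (shift x ω) z ↔ x + y ∈ cluster ω (x + z) := by
  constructor
  · intro h
    exact Relation.ReflTransGen.lift (fun w => x + w)
      (fun a b hab => (edgeOpen_shift x ω a b).1 hab) _ _ h
  · intro h
    have := Relation.ReflTransGen.lift (fun w => -x + w)
      (fun a b hab => by
        have : edgeOpen (shift x ω) (-x + a) (-x + b) := by
          rw [edgeOpen_shift]
          simpa using hab
        exact this) _ _ h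
    simpa [Function.onFun, cluster] using this

lemma cluster_eq_of_edge {ω : Config d} {a b : Zd d} (h : edgeOpen ω a b) :
    cluster ω a = cluster ω b := by
  ext c
  constructor
  · intro hc
    exact Relation.ReflTransGen.trans
      (Relation.ReflTransGen.single ((edgeOpen_comm ω a b).1 h)) hc
  · intro hc
    exact Relation.ReflTransGen.trans (Relation.ReflTransGen.single h) hc

lemma cluster_shift_eq (x : Zd d) (ω : Config d) (z : Zd d) :
    cluster (shift x ω) z = (fun y => x + y) ⁻¹' (cluster ω (x + z)) := by
  ext y
  exact mem_cluster_shift x ω z y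

lemma infinite_cluster_shift {ω : Config d} {e : Zd d} (h : edgeOpen ω 0 e)
    (hi : (cluster ω 0).Infinite) : (cluster (shift e ω) 0).Infinite := by
  rw [cluster_shift_eq]
  have h1 : cluster ω (e + 0) = cluster ω 0 := by
    rw [add_zero]
    exact (cluster_eq_of_edge h).symm
  rw [h1]
  exact hi.preimage (by
    intro y _
    exact ⟨y - e, by simp⟩)

lemma edgeOpen_shift_neg {ω : Config d} {e : Zd d} (h : edgeOpen ω 0 e) :
    edgeOpen (shift e ω) 0 (-e) := by
  rw [edgeOpen_shift]
  simpa [edgeOpen_comm (a := (0:Zd d))] using (edgeOpen_comm ω 0 e).1 h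

/-- The key set `A_e`. -/
def Ae (d : ℕ) (e : Zd d) : Set (Config d) :=
  {ω | edgeOpen ω 0 e ∧ ω ∈ InfiniteCluster0 d}

lemma mem_Ae_shift {e : Zd d} {ω : Config d} (h : ω ∈ Ae d e) :
    shift e ω ∈ Ae d (-e) := by
  obtain ⟨h1, h2⟩ := h
  refine ⟨edgeOpen_shift_neg h1, ?_⟩
  exact infinite_cluster_shift h1 h2

lemma mem_Ae_shift_iff (e : Zd d) (ω : Config d) :
    ω ∈ Ae d e ↔ shift e ω ∈ Ae d (-e) := by
  constructor
  · exact mem_Ae_shift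
  · intro h
    have := mem_Ae_shift h
    simpa using this
lemma measurableSet_edgeOpen (x y : Zd d) :
    MeasurableSet {ω : Config d | edgeOpen ω x y} := by
  have : {ω : Config d | edgeOpen ω x y} =
      (⋃ i : Fin d, {ω : Config d | y = x + unitV d i ∧ ω (x, i) = true}) ∪
      (⋃ i : Fin d, {ω : Config d | x = y + unitV d i ∧ ω (y, i) = true}) := by
    ext ω
    simp [edgeOpen, Set.mem_iUnion, Set.mem_setOf_eq]
  rw [this]
  have key : ∀ (P : Prop) (a : Zd d × Fin d),
      MeasurableSet {ω : Config d | P ∧ ω a = true} := by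
    intro P a
    by_cases hP : P
    · have : {ω : Config d | P ∧ ω a = true} = (fun ω : Config d => ω a) ⁻¹' {true} := by
        ext ω; simp [hP]
      rw [this]
      exact measurable_pi_apply a (by trivial)
    · have : {ω : Config d | P ∧ ω a = true} = ∅ := by
        ext ω; simp [hP]
      rw [this]; exact MeasurableSet.empty
  exact ((MeasurableSet.iUnion fun i => key _ _).union (MeasurableSet.iUnion fun i => key _ _))

lemma measurableSet_chain (x : Zd d) (l : List (Zd d)) :
    MeasurableSet {ω : Config d | List.Chain (edgeOpen ω) x l} := by
  induction l generalizing x with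
  | nil => simp [List.Chain]
  | cons a l ih =>
    have : {ω : Config d | List.Chain (edgeOpen ω) x (a :: l)} =
        {ω : Config d | edgeOpen ω x a} ∩ {ω : Config d | List.Chain (edgeOpen ω) a l} := by
      ext ω; simp [List.Chain, List.chain_cons, Set.mem_setOf_eq]
    rw [this]
    exact (measurableSet_edgeOpen x a).inter (ih a)

lemma measurableSet_mem_cluster (x y : Zd d) :
    MeasurableSet {ω : Config d | y ∈ cluster ω x} := by
  have : {ω : Config d | y ∈ cluster ω x} =
      ⋃ l : List (Zd d), {ω : Config d |
        List.Chain (edgeOpen ω) x l ∧ (x :: l).getLast (by simp) = y} := by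
    ext ω
    simp only [Set.mem_setOf_eq, Set.mem_iUnion]
    constructor
    · intro h
      exact List.exists_isChain_cons_of_relationReflTransGen h
    · rintro ⟨l, h1, h2⟩
      exact List.relationReflTransGen_of_exists_isChain_cons l h1 h2
  rw [this]
  apply MeasurableSet.iUnion
  intro l
  by_cases hl : (x :: l).getLast (by simp) = y
  · have : {ω : Config d | List.Chain (edgeOpen ω) x l ∧ (x :: l).getLast (by simp) = y}
        = {ω : Config d | List.Chain (edgeOpen ω) x l} := by
      ext ω; simp [hl]
    rw [this]
    exact measurableSet_chain x l
  · have : {ω : Config d | List.Chain (edgeOpen ω) x l ∧ (x :: l).getLast (by simp) = y}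
        = ∅ := by
      ext ω; simp [hl]
    rw [this]; exact MeasurableSet.empty

lemma infinite_iff_forall_finset {α : Type*} (S : Set α) :
    S.Infinite ↔ ∀ F : Finset α, ∃ y ∈ S, y ∉ F := by
  constructor
  · intro h F
    obtain ⟨y, hy, hy2⟩ := h.exists_notMem_finset F
    exact ⟨y, hy, hy2⟩
  · intro h
    intro hfin
    obtain ⟨y, hy, hy2⟩ := h hfin.toFinset
    exact hy2 (hfin.mem_toFinset.2 hy)

lemma measurableSet_infiniteCluster0 :
    MeasurableSet (InfiniteCluster0 d) := by
  have : InfiniteCluster0 d =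
      ⋂ F : Finset (Zd d), ⋃ y : Zd d, ⋃ (_ : y ∉ F), {ω : Config d | y ∈ cluster ω 0} := by
    ext ω
    simp only [InfiniteCluster0, Set.mem_setOf_eq, Set.mem_iInter, Set.mem_iUnion]
    rw [infinite_iff_forall_finset]
    constructor
    · intro h F
      obtain ⟨y, h1, h2⟩ := h F
      exact ⟨y, h2, h1⟩
    · intro h F
      obtain ⟨y, h1, h2⟩ := h F
      exact ⟨y, h2, h1⟩
  rw [this]
  exact MeasurableSet.iInter fun F => MeasurableSet.iUnion fun y =>
    MeasurableSet.iUnion fun _ => measurableSet_mem_cluster 0 y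

lemma measurableSet_Ae (e : Zd d) : MeasurableSet (Ae d e) :=
  (measurableSet_edgeOpen 0 e).inter measurableSet_infiniteCluster0
/-- Basic cylinder sets. -/
def Cyl (d : ℕ) : Set (Set (Config d)) :=
  {S | ∃ (s : Finset (Zd d × Fin d)) (f : (Zd d × Fin d) → Bool),
    S = {ω | ∀ a ∈ s, ω a = f a}}

lemma measurableSet_cyl (s : Finset (Zd d × Fin d)) (f : (Zd d × Fin d) → Bool) :
    MeasurableSet {ω : Config d | ∀ a ∈ s, ω a = f a} := by
  have h : {ω : Config d | ∀ a ∈ s, ω a = f a} = ⋂ a ∈ s, {ω : Config d | ω a = f a} := by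
    ext ω; simp only [Set.mem_setOf_eq, Set.mem_iInter]
  rw [h]
  refine MeasurableSet.biInter s.countable_toSet (fun a _ => ?_)
  have h2 : {ω : Config d | ω a = f a} = (fun ω : Config d => ω a) ⁻¹' {f a} := by
    ext ω; simp
  rw [h2]
  exact measurable_pi_apply a (measurableSet_singleton (f a))

lemma generateFrom_cylinders :
    (inferInstance : MeasurableSpace (Config d)) = MeasurableSpace.generateFrom (Cyl d) := by
  refine le_antisymm ?_ (MeasurableSpace.generateFrom_le ?_)
  · have key : ∀ a : Zd d × Fin d,
        @Measurable (Config d) Bool (MeasurableSpace.generateFrom (Cyl d)) _ (fun ω => ω a) := by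
      intro a T _
      have h : (fun ω : Config d => ω a) ⁻¹' T = ⋃ b ∈ T, {ω : Config d | ω a = b} := by
        ext ω; simp
      rw [h]
      refine MeasurableSet.biUnion (Set.to_countable T) (fun b _ => ?_)
      apply MeasurableSpace.measurableSet_generateFrom
      exact ⟨{a}, fun _ => b, by ext ω; simp⟩
    exact iSup_le fun a => measurable_iff_comap_le.mp (key a)
  · rintro S ⟨s, f, rfl⟩
    exact measurableSet_cyl s f

lemma isPiSystem_cylinders : IsPiSystem (Cyl d) := by
  rintro S ⟨s₁, f₁, rfl⟩ T ⟨s₂, f₂, rfl⟩ hne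
  obtain ⟨ω₀, h₀1, h₀2⟩ := hne
  refine ⟨s₁ ∪ s₂, fun a => if a ∈ s₁ then f₁ a else f₂ a, ?_⟩
  ext ω
  simp only [Set.mem_inter_iff, Set.mem_setOf_eq, Finset.mem_union]
  constructor
  · rintro ⟨h1, h2⟩ a ha
    by_cases ha1 : a ∈ s₁
    · rw [if_pos ha1]; exact h1 a ha1
    · rw [if_neg ha1]
      exact h2 a (ha.resolve_left ha1)
  · intro h
    constructor
    · intro a ha
      have := h a (Or.inl ha)
      rwa [if_pos ha] at this
    · intro a ha
      have hh := h a (Or.inr ha)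
      by_cases ha1 : a ∈ s₁
      · rw [if_pos ha1] at hh
        rw [hh]
        exact (h₀1 a ha1).symm.trans (h₀2 a ha)
      · rwa [if_neg ha1] at hh

lemma bernoulli_map_shift {Q : Measure (Config d)} {q : ℝ} (hB : IsBernoulli Q q)
    (x : Zd d) : Q.map (shift x) = Q := by
  obtain ⟨hprob, hfdd⟩ := hB
  haveI := hprob
  haveI : IsProbabilityMeasure (Q.map (shift x)) :=
    Measure.isProbabilityMeasure_map (measurable_shift x).aemeasurable
  refine MeasureTheory.ext_of_generate_finite (Cyl d) generateFrom_cylinders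
    isPiSystem_cylinders ?_ (by simp)
  rintro S ⟨s, f, rfl⟩
  rw [Measure.map_apply (measurable_shift x) (measurableSet_cyl s f)]
  have hinj : Set.InjOn (fun a : Zd d × Fin d => (x + a.1, a.2)) s := by
    intro a _ b _ hab
    have hab' : (x + a.1, a.2) = (x + b.1, b.2) := hab
    obtain ⟨h1, h2⟩ := Prod.ext_iff.mp hab'
    exact Prod.ext (add_left_cancel h1) h2
  have hpre : shift x ⁻¹' {ω : Config d | ∀ a ∈ s, ω a = f a}
      = {ω : Config d | ∀ b ∈ s.image (fun a => (x + a.1, a.2)),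
          ω b = f (b.1 - x, b.2)} := by
    ext ω
    simp only [Set.mem_preimage, Set.mem_setOf_eq, Finset.mem_image, shift]
    constructor
    · rintro h b ⟨a, ha, rfl⟩
      simpa [add_sub_cancel_left] using h a ha
    · intro h a ha
      have := h (x + a.1, a.2) ⟨a, ha, rfl⟩
      simpa [add_sub_cancel_left] using this
  rw [hpre, hfdd, hfdd, Finset.prod_image hinj]
  apply Finset.prod_congr rfl
  intro a _
  simp [add_sub_cancel_left]
lemma isLocal_measurable {u : Config d → ℝ} (hu : IsLocal u) :
    Measurable u ∧ ∃ C : ℝ, ∀ ω, |u ω| ≤ C := by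
  obtain ⟨s, hs⟩ := hu
  set U : (↥s → Bool) → ℝ :=
    fun g => u (fun a => if h : a ∈ s then g ⟨a, h⟩ else false) with hUdef
  have hfac : ∀ ω : Config d, u ω = U (fun a : ↥s => ω ↑a) := by
    intro ω
    apply hs
    intro a ha
    simp [ha]
  constructor
  · have hUm : Measurable U := measurable_of_countable U
    have hr : Measurable (fun (ω : Config d) (a : ↥s) => ω ↑a) :=
      measurable_pi_lambda _ fun a => measurable_pi_apply _
    have : u = fun ω => U (fun a : ↥s => ω ↑a) := funext hfac
    rw [this]
    exact hUm.comp hr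
  · refine ⟨Finset.univ.sup' ⟨fun _ => false, Finset.mem_univ _⟩ (fun g => |U g|), ?_⟩
    intro ω
    rw [hfac ω]
    exact Finset.le_sup' (fun g => |U g|) (Finset.mem_univ (fun a : ↥s => ω ↑a))

lemma exists_open_edge_of_infinite {ω : Config d} (h : (cluster ω 0).Infinite) :
    ∃ z, edgeOpen ω 0 z := by
  obtain ⟨y, hy, hy0⟩ := h.exists_notMem_finset {0}
  rcases Relation.ReflTransGen.cases_head hy with h0 | ⟨z, hz, _⟩
  · exact absurd (Finset.mem_singleton.2 h0.symm) hy0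
  · exact ⟨z, hz⟩

lemma unitV_mem_nbrs (i : Fin d) : unitV d i ∈ nbrs d :=
  Finset.mem_image.2 ⟨(i, true), Finset.mem_univ _, rfl⟩

lemma neg_unitV_mem_nbrs (i : Fin d) : -unitV d i ∈ nbrs d :=
  Finset.mem_image.2 ⟨(i, false), Finset.mem_univ _, rfl⟩

lemma neg_mem_nbrs {e : Zd d} (h : e ∈ nbrs d) : -e ∈ nbrs d := by
  obtain ⟨⟨i, b⟩, _, rfl⟩ := Finset.mem_image.1 h
  cases b
  · simpa using unitV_mem_nbrs i
  · simpa using neg_unitV_mem_nbrs i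

lemma deg_ne_zero {ω : Config d} (h : ω ∈ InfiniteCluster0 d) : deg ω 0 ≠ 0 := by
  obtain ⟨z, hz⟩ := exists_open_edge_of_infinite h
  have hmem : z ∈ nbrs d := by
    rcases hz with ⟨i, h1, _⟩ | ⟨i, h1, _⟩
    · rw [h1, zero_add]; exact unitV_mem_nbrs i
    · rw [eq_neg_of_add_eq_zero_left h1.symm]; exact neg_unitV_mem_nbrs i
  have : z ∈ (nbrs d).filter (fun e => edgeOpen ω 0 (0 + e)) :=
    Finset.mem_filter.2 ⟨hmem, by rwa [zero_add]⟩
  exact Finset.card_ne_zero_of_mem this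

lemma pcOf_nonneg (Qf : ℝ → Measure (Config d))
    (hQf : ∀ q ∈ Set.Icc (0 : ℝ) 1, IsBernoulli (Qf q) q) : 0 ≤ pcOf Qf := by
  obtain ⟨_, hf0⟩ := hQf 0 ⟨le_refl 0, zero_le_one⟩
  have hsingle : ∀ a : Zd d × Fin d, Qf 0 {ω : Config d | ω a = true} = 0 := by
    intro a
    have h1 : {ω : Config d | ω a = true}
        = {ω : Config d | ∀ b ∈ ({a} : Finset (Zd d × Fin d)), ω b = (fun _ => true) b} := by
      ext ω; simp
    rw [h1, hf0]
    simp
  have h0 : Qf 0 (InfiniteCluster0 d) = 0 := by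
    have hsub : InfiniteCluster0 d ⊆
        ⋃ i : Fin d, ({ω : Config d | ω (0, i) = true}
          ∪ {ω : Config d | ω (-unitV d i, i) = true}) := by
      intro ω hω
      obtain ⟨z, hz⟩ := exists_open_edge_of_infinite hω
      rcases hz with ⟨i, _, h⟩ | ⟨i, h1, h⟩
      · exact Set.mem_iUnion.2 ⟨i, Or.inl h⟩
      · refine Set.mem_iUnion.2 ⟨i, Or.inr ?_⟩
        have hz2 : z = -unitV d i := eq_neg_of_add_eq_zero_left h1.symm
        rw [← hz2]; exact h
    exact measure_mono_null hsub (measure_iUnion_null fun i =>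
      measure_union_null (hsingle _) (hsingle _))
  exact le_csSup ⟨1, fun q hq => hq.1.2⟩ ⟨⟨le_refl 0, zero_le_one⟩, h0⟩

/-- Shift as a measurable equivalence. -/
def shiftEquiv (x : Zd d) : Config d ≃ᵐ Config d where
  toFun := shift x
  invFun := shift (-x)
  left_inv := fun ω => by simp
  right_inv := fun ω => by simp
  measurable_toFun := measurable_shift x
  measurable_invFun := measurable_shift (-x)

lemma isFiniteMeasure_Mm (Q : Measure (Config d)) [IsFiniteMeasure Q] :
    IsFiniteMeasure (Mm Q) := by
  constructor
  rw [Mm, Measure.finset_sum_apply]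
  refine ENNReal.sum_lt_top.2 fun e _ => ?_
  rw [Measure.map_apply measurable_prodMk_right MeasurableSet.univ]
  exact lt_of_le_of_lt (Measure.restrict_le_self _) (measure_lt_top Q Set.univ)

lemma map_shift_restrict_Ae {Q : Measure (Config d)} {q : ℝ} (hB : IsBernoulli Q q)
    (e : Zd d) : (Q.restrict (Ae d e)).map (shift e) = Q.restrict (Ae d (-e)) := by
  have h1 : shift e ⁻¹' (Ae d (-e)) = Ae d e := by
    ext ω; exact (mem_Ae_shift_iff e ω).symm
  rw [← h1, ← Measure.restrict_map (measurable_shift e) (measurableSet_Ae (-e)),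
    bernoulli_map_shift hB]

end AuxLemmas

/-- integration by parts formula:
`∫ v ∇^{(ω)}u dM = − Q[ n^ω(0) u(ω) ∇^{(ω)*}v(ω) 1_{#C₀(ω)=∞} ]`
for square-integrable `v` and local `u`. -/
theorem integration_by_parts (d : ℕ) (hd : 2 ≤ d)
    (Qf : ℝ → MeasureTheory.Measure (Config d))
    (hQf : ∀ q ∈ Set.Icc (0 : ℝ) 1, IsBernoulli (Qf q) q)
    (p : ℝ) (hp1 : p ≤ 1) (hpc : pcOf Qf < p)
    (v : Config d × Zd d → ℝ) (hv : MeasureTheory.MemLp v 2 (Mm (Qf p)))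
    (u : Config d → ℝ) (hu : IsLocal u) :
    ∫ q, v q * gradF u q ∂(Mm (Qf p)) =
      - ∫ ω in InfiniteCluster0 d,
          (deg ω 0 : ℝ) * u ω * divStarF ω (fun ω' e => v (ω', e)) ∂(Qf p) := by
  have hp0 : (0:ℝ) ≤ p := le_of_lt (lt_of_le_of_lt (pcOf_nonneg Qf hQf) hpc)
  have hB : IsBernoulli (Qf p) p := hQf p ⟨hp0, hp1⟩
  set Q := Qf p with hQ
  haveI hprob : IsProbabilityMeasure Q := hB.1
  haveI hMmfin : IsFiniteMeasure (Mm Q) := isFiniteMeasure_Mm Q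
  obtain ⟨hum, C, hC⟩ := isLocal_measurable hu
  have hCn : ∀ ω, ‖u ω‖ ≤ C := fun ω => by rw [Real.norm_eq_abs]; exact hC ω
  have hMm : Mm Q = ∑ e ∈ nbrs d, (Q.restrict (Ae d e)).map (fun ω => (ω, e)) := rfl
  have hle : ∀ e ∈ nbrs d, (Q.restrict (Ae d e)).map (fun ω => (ω, e)) ≤ Mm Q := by
    intro e he
    rw [hMm]
    refine Measure.le_iff.2 fun s hs => ?_
    rw [Measure.finset_sum_apply]
    exact Finset.single_le_sum (f := fun e =>
      ((Q.restrict (Ae d e)).map (fun ω => (ω, e))) s) (fun i _ => zero_le) he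
  -- integrability of the slices
  have hslice : ∀ e ∈ nbrs d, Integrable (fun ω => v (ω, e)) (Q.restrict (Ae d e)) := by
    intro e he
    have haesm : AEStronglyMeasurable v ((Q.restrict (Ae d e)).map (fun ω => (ω, e))) :=
      hv.aestronglyMeasurable.mono_measure (hle e he)
    have hml : MemLp (v ∘ fun ω => (ω, e)) 2 (Q.restrict (Ae d e)) :=
      (memLp_map_measure_iff haesm measurable_prodMk_right.aemeasurable).1
        (hv.mono_measure (hle e he))
    exact hml.integrable one_le_two
  have hslice' : ∀ e ∈ nbrs d,
      Integrable (fun ω => v (shift e ω, -e)) (Q.restrict (Ae d e)) := by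
    intro e he
    have h1 : Integrable (fun ω => v (ω, -e)) ((Q.restrict (Ae d e)).map (shift e)) := by
      rw [map_shift_restrict_Ae hB e]
      exact hslice (-e) (neg_mem_nbrs he)
    exact ((shiftEquiv e).measurableEmbedding.integrable_map_iff).1 h1
  have hI1 : ∀ e ∈ nbrs d,
      Integrable (fun ω => v (ω, e) * u (shift e ω)) (Q.restrict (Ae d e)) := by
    intro e he
    exact ((hslice e he).bdd_mul (hum.comp (measurable_shift e)).aestronglyMeasurable
      (ae_of_all _ fun ω => hCn _)).congr (ae_of_all _ fun ω => mul_comm _ _)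
  have hI2 : ∀ e ∈ nbrs d,
      Integrable (fun ω => v (ω, e) * u ω) (Q.restrict (Ae d e)) := by
    intro e he
    exact ((hslice e he).bdd_mul hum.aestronglyMeasurable
      (ae_of_all _ fun ω => hCn _)).congr (ae_of_all _ fun ω => mul_comm _ _)
  have hI3 : ∀ e ∈ nbrs d,
      Integrable (fun ω => u ω * v (ω, e)) (Q.restrict (Ae d e)) := by
    intro e he
    exact (hslice e he).bdd_mul hum.aestronglyMeasurable (ae_of_all _ fun ω => hCn _)
  have hI4 : ∀ e ∈ nbrs d,
      Integrable (fun ω => u ω * v (shift e ω, -e)) (Q.restrict (Ae d e)) := by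
    intro e he
    exact (hslice' e he).bdd_mul hum.aestronglyMeasurable (ae_of_all _ fun ω => hCn _)
  -- gradient measurability / integrability
  have hgm : Measurable (gradF u) := by
    have h1 : Measurable (fun q : Config d × Zd d => u (shift q.2 q.1)) := by
      apply measurable_from_prod_countable_left
      intro e
      exact hum.comp (measurable_shift e)
    exact h1.sub (hum.comp measurable_fst)
  have hvInt : Integrable v (Mm Q) := hv.integrable one_le_two
  have hFInt : Integrable (fun q => v q * gradF u q) (Mm Q) := by
    have hb : ∀ q : Config d × Zd d, ‖gradF u q‖ ≤ C + C := by
      intro q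
      simp only [gradF]
      exact le_trans (norm_sub_le _ _) (add_le_add (hCn _) (hCn _))
    exact (hvInt.bdd_mul hgm.aestronglyMeasurable (ae_of_all _ hb)).congr
      (ae_of_all _ fun q => mul_comm _ _)
  -- expansion of the LHS
  have hexp : ∫ q, v q * gradF u q ∂(Mm Q)
      = ∑ e ∈ nbrs d, ∫ ω in Ae d e, v (ω, e) * (u (shift e ω) - u ω) ∂Q := by
    rw [hMm, integral_finset_sum_measure (fun e he => hFInt.mono_measure (hle e he))]
    refine Finset.sum_congr rfl fun e he => ?_
    rw [integral_map measurable_prodMk_right.aemeasurable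
      (hFInt.aestronglyMeasurable.mono_measure (hle e he))]
    rfl
  -- change of variables
  have key : ∀ e ∈ nbrs d,
      ∫ ω in Ae d e, v (ω, e) * u (shift e ω) ∂Q
        = ∫ ω in Ae d (-e), u ω * v (shift (-e) ω, e) ∂Q := by
    intro e he
    set G : Config d → ℝ := fun ω => v (ω, e) * u (shift e ω) with hG
    have h1 : ∫ ω in Ae d (-e), u ω * v (shift (-e) ω, e) ∂Q
        = ∫ ω in Ae d (-e), G (shift (-e) ω) ∂Q := by
      refine setIntegral_congr_fun (measurableSet_Ae (-e)) ?_
      intro ω hω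
      simp only [hG]
      have h2 : shift e (shift (-e) ω) = ω := by simp
      rw [h2, mul_comm]
    rw [h1]
    have h2 : (fun ω => (Ae d (-e)).indicator (fun ω' => G (shift (-e) ω')) ω)
        = fun ω => ((Ae d e).indicator G) (shift (-e) ω) := by
      funext ω
      by_cases hω : ω ∈ Ae d (-e)
      · have hω' : shift (-e) ω ∈ Ae d e := by
          have := (mem_Ae_shift_iff (-e) ω).1 hω
          simpa using this
        rw [Set.indicator_of_mem hω, Set.indicator_of_mem hω']
      · have hω' : shift (-e) ω ∉ Ae d e := by
          intro hc
          apply hω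
          rw [mem_Ae_shift_iff (-e) ω]
          simpa using hc
        rw [Set.indicator_of_notMem hω, Set.indicator_of_notMem hω']
    have hmp : MeasurePreserving (shift (-e) : Config d → Config d) Q Q :=
      ⟨measurable_shift _, bernoulli_map_shift hB _⟩
    have hemb : MeasurableEmbedding (shift (-e) : Config d → Config d) :=
      (shiftEquiv (-e)).measurableEmbedding
    conv_rhs => rw [← integral_indicator (measurableSet_Ae (-e))]
    rw [h2, hmp.integral_comp hemb ((Ae d e).indicator G),
      integral_indicator (measurableSet_Ae e)]
  -- RHS rewriting
  have hindeq : ∀ e : Zd d,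
      (fun ω => if edgeOpen ω 0 e then u ω * (v (ω, e) - v (shift e ω, -e)) else 0)
      = Set.indicator {ω : Config d | edgeOpen ω 0 e}
          (fun ω => u ω * (v (ω, e) - v (shift e ω, -e))) := by
    intro e
    funext ω
    rw [Set.indicator_apply]
    exact if_congr Iff.rfl rfl rfl
  have hsetAe : ∀ e : Zd d,
      {ω : Config d | edgeOpen ω 0 e} ∩ InfiniteCluster0 d = Ae d e := by
    intro e; rfl
  have hInts : ∀ e ∈ nbrs d,
      Integrable (fun ω => if edgeOpen ω 0 e then u ω * (v (ω, e) - v (shift e ω, -e)) else 0)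
        (Q.restrict (InfiniteCluster0 d)) := by
    intro e he
    rw [hindeq e]
    refine (integrable_indicator_iff (measurableSet_edgeOpen 0 e)).2 ?_
    have hres : (Q.restrict (InfiniteCluster0 d)).restrict {ω : Config d | edgeOpen ω 0 e}
        = Q.restrict (Ae d e) := by
      rw [Measure.restrict_restrict (measurableSet_edgeOpen 0 e), hsetAe e]
    have hint : Integrable (fun ω => u ω * (v (ω, e) - v (shift e ω, -e)))
        (Q.restrict (Ae d e)) :=
      ((hI3 e he).sub (hI4 e he)).congr (ae_of_all _ fun ω => by simp only [Pi.sub_apply]; ring)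
    exact hint.mono_measure (le_of_eq hres)
  have hcong : Set.EqOn
      (fun ω => (deg ω 0 : ℝ) * u ω * divStarF ω (fun ω' e => v (ω', e)))
      (fun ω => ∑ e ∈ nbrs d,
        if edgeOpen ω 0 e then u ω * (v (ω, e) - v (shift e ω, -e)) else 0)
      (InfiniteCluster0 d) := by
    intro ω hω
    have hne : (deg ω 0 : ℝ) ≠ 0 := Nat.cast_ne_zero.2 (deg_ne_zero hω)
    have halg : ∀ (A B S : ℝ), A ≠ 0 → A * B * (A⁻¹ * S) = B * S := by
      intro A B S hA
      field_simp
    simp only [divStarF]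
    rw [halg _ _ _ hne, Finset.mul_sum]
    refine Finset.sum_congr rfl fun e he => ?_
    rw [mul_ite, mul_zero]
  have hsplitR : ∀ e ∈ nbrs d,
      (∫ ω in InfiniteCluster0 d,
        (if edgeOpen ω 0 e then u ω * (v (ω, e) - v (shift e ω, -e)) else 0) ∂Q)
      = (∫ ω in Ae d e, u ω * v (ω, e) ∂Q)
          - ∫ ω in Ae d e, u ω * v (shift e ω, -e) ∂Q := by
    intro e he
    rw [hindeq e, setIntegral_indicator (measurableSet_edgeOpen 0 e)]
    have hs2 : InfiniteCluster0 d ∩ {ω : Config d | edgeOpen ω 0 e} = Ae d e := by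
      rw [Set.inter_comm]; exact hsetAe e
    rw [hs2]
    have h3 : (fun ω => u ω * (v (ω, e) - v (shift e ω, -e)))
        = fun ω => u ω * v (ω, e) - u ω * v (shift e ω, -e) := by
      funext ω; ring
    rw [h3]
    exact integral_sub (hI3 e he) (hI4 e he)
  have hR : ∫ ω in InfiniteCluster0 d,
        (deg ω 0 : ℝ) * u ω * divStarF ω (fun ω' e => v (ω', e)) ∂Q
      = ∑ e ∈ nbrs d, ((∫ ω in Ae d e, u ω * v (ω, e) ∂Q)
          - ∫ ω in Ae d e, u ω * v (shift e ω, -e) ∂Q) := by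
    rw [setIntegral_congr_fun measurableSet_infiniteCluster0 hcong,
      integral_finset_sum (nbrs d) hInts]
    exact Finset.sum_congr rfl hsplitR
  -- split the LHS
  have hL : ∀ e ∈ nbrs d,
      ∫ ω in Ae d e, v (ω, e) * (u (shift e ω) - u ω) ∂Q
      = (∫ ω in Ae d e, v (ω, e) * u (shift e ω) ∂Q)
          - ∫ ω in Ae d e, v (ω, e) * u ω ∂Q := by
    intro e he
    have h3 : (fun ω => v (ω, e) * (u (shift e ω) - u ω))
        = fun ω => v (ω, e) * u (shift e ω) - v (ω, e) * u ω := by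
      funext ω; ring
    rw [h3]
    exact integral_sub (hI1 e he) (hI2 e he)
  have hXZ : ∑ e ∈ nbrs d, ∫ ω in Ae d e, v (ω, e) * u (shift e ω) ∂Q
      = ∑ e ∈ nbrs d, ∫ ω in Ae d e, u ω * v (shift e ω, -e) ∂Q := by
    refine Finset.sum_nbij' (fun e => -e) (fun e => -e)
      (fun e he => neg_mem_nbrs he) (fun e he => neg_mem_nbrs he)
      (fun e _ => neg_neg e) (fun e _ => neg_neg e) ?_
    intro e he
    rw [key e he]
    simp only [neg_neg]
  have hYY : ∀ e ∈ nbrs d,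
      ∫ ω in Ae d e, v (ω, e) * u ω ∂Q = ∫ ω in Ae d e, u ω * v (ω, e) ∂Q := by
    intro e he
    exact integral_congr_ae (ae_of_all _ fun ω => mul_comm _ _)
  rw [hexp, Finset.sum_congr rfl hL, hR, Finset.sum_sub_distrib,
    Finset.sum_sub_distrib, neg_sub, hXZ]
  congr 1
  exact Finset.sum_congr rfl hYY

end PercWalk
end
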